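/- arXiv:0910.4531 — 10 statements merged into one kernel-verified Lean document; each statement's English description precedes it below -/
import Mathlib

section
/- Let K be a field, V a finite-dimensional K-vector space, and 𝔤 a Lie subalgebra of End_K(V) (with the commutator bracket). Let 𝔫 be a Lie ideal of 𝔤 and 𝔞 a Lie subalgebra of 𝔤. If every element of 𝔫 is a nilpotent endomorphism of V and every element of 𝔞 is a nilpotent endomorphism of V, then every element of the subspace 𝔞 + 𝔫 is a nilpotent endomorphism of V. -/
attribute [local instance 100] LieRing.ofAssociativeRing

/-!
By Engel's theorem `V` is a nilpotent `𝔫`-module. The terms `F k` of its lower central series are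
`𝔤`-submodules because `𝔫` is an ideal of `𝔤`, and `𝔫` maps `F k` into `F (k + 1)`. So for
`x ∈ 𝔞` and `y ∈ 𝔫`, `x + y` and `x` induce the same map on each `F k / F (k + 1)`; if `x ^ m = 0`
then `(x + y) ^ m` maps `F k` into `F (k + 1)`, and `(x + y) ^ (m * r) = 0` once `F r = 0`.
-/

namespace LieIdeal

open LieModule

variable {R L M : Type*} [CommRing R] [LieRing L] [LieAlgebra R L]
  [AddCommGroup M] [Module R M] [LieRingModule L M] [LieModule R L M]
  {I : LieIdeal R L} {k : ℕ}

theorem pow_toEnd_mem_lcs (x : L) (j : ℕ) {v : M} (hv : v ∈ I.lcs M k) :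
    (toEnd R L M x ^ j) v ∈ I.lcs M k := by
  induction j with
  | zero => simpa using hv
  | succ j ih =>
    rw [pow_succ', Module.End.mul_apply, toEnd_apply_apply]
    exact (I.lcs M k).lie_mem ih

theorem pow_toEnd_add_sub_mem_lcs_succ (x : L) {y : L} (hy : y ∈ I) (j : ℕ) {v : M}
    (hv : v ∈ I.lcs M k) :
    (toEnd R L M (x + y) ^ j) v - (toEnd R L M x ^ j) v ∈ I.lcs M (k + 1) := by
  induction j with
  | zero => simp
  | succ j ih =>
    have hsplit : (toEnd R L M (x + y) ^ (j + 1)) v - (toEnd R L M x ^ (j + 1)) v =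
        ⁅x + y, (toEnd R L M (x + y) ^ j) v - (toEnd R L M x ^ j) v⁆ +
          ⁅y, (toEnd R L M x ^ j) v⁆ := by
      simp only [pow_succ', Module.End.mul_apply, toEnd_apply_apply, lie_sub, add_lie]
      abel
    rw [hsplit]
    exact add_mem ((I.lcs M (k + 1)).lie_mem ih)
      (by rw [lcs_succ]; exact LieSubmodule.lie_mem_lie hy (pow_toEnd_mem_lcs x j hv))

theorem isNilpotent_toEnd_add [IsNilpotent I M] {x y : L}
    (hx : _root_.IsNilpotent (toEnd R L M x)) (hy : y ∈ I) :
    _root_.IsNilpotent (toEnd R L M (x + y)) := by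
  obtain ⟨m, hm⟩ := hx
  obtain ⟨r, hr⟩ := IsNilpotent.nilpotent R I M
  have hstep : ∀ k, ∀ v ∈ I.lcs M k, (toEnd R L M (x + y) ^ m) v ∈ I.lcs M (k + 1) := by
    intro k v hv
    simpa [hm] using pow_toEnd_add_sub_mem_lcs_succ x hy m hv
  have hchain : ∀ l (v : M), (toEnd R L M (x + y) ^ (m * l)) v ∈ I.lcs M l := by
    intro l
    induction l with
    | zero => simp
    | succ l ih =>
      intro v
      rw [show m * (l + 1) = m + m * l by ring, pow_add, Module.End.mul_apply]
      exact hstep l _ (ih v)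
  have hlcs : I.lcs M r = ⊥ := by
    rw [← LieSubmodule.toSubmodule_inj, coe_lcs_eq, hr]; rfl
  refine ⟨m * r, LinearMap.ext fun v => ?_⟩
  simpa [hlcs] using hchain r v

end LieIdeal

namespace LieSubalgebra

variable {R L M : Type*} [CommRing R] [LieRing L] [LieAlgebra R L] [AddCommGroup M] [Module R M]

def lieIdealOfSubmodule (g : LieSubalgebra R L) (n : Submodule R L)
    (hideal : ∀ x ∈ g, ∀ y ∈ n, ⁅x, y⁆ ∈ n) : LieIdeal R g :=
  { n.comap g.toSubmodule.subtype with lie_mem := fun {x _} hy => hideal x x.2 _ hy }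

theorem toEnd_eq_coe (g : LieSubalgebra R (Module.End R M)) (z : g) :
    LieModule.toEnd R g M z = z := by
  rw [toEnd_eq, LieModule.toEnd_module_end]
  rfl

end LieSubalgebra

/-- Lemma (e.g. Hochschild, Ch. VII, Lemma 1.4): if `𝔤` is a linear Lie algebra,
`𝔫` a Lie ideal of `𝔤` and `𝔞` a Lie subalgebra of `𝔤`, and all elements of
`𝔫 ∪ 𝔞` are nilpotent endomorphisms, then all elements of `𝔞 + 𝔫` are nilpotent. -/
theorem stmt_0 {K V : Type*} [Field K] [AddCommGroup V] [Module K V]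
    [FiniteDimensional K V]
    (g : LieSubalgebra K (Module.End K V))
    (n : Submodule K (Module.End K V))
    (a : LieSubalgebra K (Module.End K V))
    (hng : n ≤ g.toSubmodule) (hag : a ≤ g)
    (hideal : ∀ x ∈ g, ∀ y ∈ n, ⁅x, y⁆ ∈ n)
    (hn : ∀ f ∈ n, IsNilpotent f)
    (ha : ∀ f ∈ a, IsNilpotent f) :
    ∀ f ∈ a.toSubmodule ⊔ n, IsNilpotent f := by
  let I := g.lieIdealOfSubmodule n hideal
  have hEngel : LieModule.IsNilpotent I V := by
    rw [LieModule.isNilpotent_iff_forall' (R := K)]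
    intro z
    change IsNilpotent (LieModule.toEnd K g V z)
    rw [g.toEnd_eq_coe]
    exact hn _ z.2
  intro f hf
  obtain ⟨x, hx, y, hy, rfl⟩ := Submodule.mem_sup.mp hf
  have hxy := I.isNilpotent_toEnd_add (M := V) (x := ⟨x, hag hx⟩) (y := ⟨y, hng hy⟩)
    (by rw [g.toEnd_eq_coe]; exact ha x hx) hy
  rwa [g.toEnd_eq_coe] at hxy
end

section
/- Let 𝔤 be a finite-dimensional complex Lie algebra with a conjugation σ, and let 𝔮 be a complex Lie subalgebra of 𝔤. Let J be a ℂ-linear derivation of 𝔤 with σ∘J = J∘σ, J(𝔮) ⊆ 𝔮, and Z − i·J(Z) ∈ 𝔮 ∩ σ(𝔮) for every Z ∈ 𝔮. Suppose J = S + N where S and N are ℂ-linear endomorphisms of 𝔤 with S∘N = N∘S, S semisimple (diagonalizable) and N nilpotent (the Jordan–Chevalley decomposition of J). Then S is again a derivation of 𝔤 and satisfies σ∘S = S∘σ, S(𝔮) ⊆ 𝔮, and Z − i·S(Z) ∈ 𝔮 ∩ σ(𝔮) for every Z ∈ 𝔮. -/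
/-!
The semisimple part `S` of `J` is a polynomial in `J` (uniqueness of the Jordan–Chevalley
decomposition), so it preserves every `J`-invariant subspace, and it acts on each generalized
eigenspace `𝔤_μ` of `J` as the scalar `μ`. A derivation satisfies `[𝔤_λ, 𝔤_μ] ⊆ 𝔤_{λ+μ}` and `σ`
maps `𝔤_μ` into `𝔤_{μ̄}`, so `S` is a derivation commuting with `σ`.

For the last property, `J` acts on `𝔮` as the scalar `-i` modulo the `J`-invariant subspace
`𝔥 = 𝔮 ∩ σ⁻¹(𝔮)`. Hence `S = P(J)` acts there as `P(-i)` and `N = J - S` as `c = -i - P(-i)`;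
nilpotency of `N` forces `c = 0` unless `𝔮 ⊆ 𝔥`, and in both cases `S` acts on `𝔮` as `-i`
modulo `𝔥`.
-/

open Polynomial

namespace Module.End

section CommSemiring

variable {R M : Type*} [CommSemiring R] [AddCommMonoid M] [Module R M]

lemma invtSubmodule_le_of_mem_adjoin {f a : End R M} (ha : a ∈ Algebra.adjoin R {f}) :
    f.invtSubmodule ≤ a.invtSubmodule := by
  intro p hp
  induction ha using Algebra.adjoin_induction with
  | mem b hb => rwa [Set.mem_singleton_iff.mp hb]
  | algebraMap r => exact fun x hx => p.smul_mem r hx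
  | add b c _ _ hb hc => exact fun x hx => p.add_mem (hb hx) (hc hx)
  | mul b c _ _ hb hc => exact fun x hx => hb (hc hx)

end CommSemiring

section CommRing

variable {R M : Type*} [CommRing R] [AddCommGroup M] [Module R M]

lemma aeval_apply_sub_eval_smul_mem {f : End R M} {p q : Submodule R M} {a : R}
    (hp : p ∈ f.invtSubmodule) (hq : ∀ x ∈ q, f x - a • x ∈ p) (P : R[X]) {x : M}
    (hx : x ∈ q) : aeval f P x - P.eval a • x ∈ p := by
  obtain ⟨Q, hQ⟩ := X_sub_C_dvd_sub_C_eval (p := P) (a := a)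
  have h := congr($(congrArg (aeval f) (hQ.trans (mul_comm _ _))) x)
  simp only [map_sub, aeval_C, map_mul, LinearMap.sub_apply, Module.algebraMap_end_apply,
    mul_apply, aeval_X] at h
  rw [h, ← map_sub]
  exact invtSubmodule_le_of_mem_adjoin (aeval_mem_adjoin_singleton R f) hp (hq x hx)

lemma mapsTo_maxGenEigenspace_of_semiconj {τ : R →+* R} {σ : M →ₛₗ[τ] M} {f : End R M}
    (hσ : σ ∘ₛₗ f = f ∘ₛₗ σ) (μ : R) :
    Set.MapsTo σ (f.maxGenEigenspace μ) (f.maxGenEigenspace (τ μ)) := by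
  have hstep : (f - τ μ • 1) ∘ₛₗ σ = σ ∘ₛₗ (f - μ • 1) := by
    ext x
    simpa using (LinearMap.congr_fun hσ x).symm
  intro x hx
  simp only [SetLike.mem_coe, mem_maxGenEigenspace] at hx ⊢
  obtain ⟨k, hk⟩ := hx
  exact ⟨k, by rw [← LinearMap.comp_apply, commute_pow_left_of_commute hstep,
    LinearMap.comp_apply, hk, map_zero]⟩

end CommRing

section Field

variable {K M : Type*} [Field K] [AddCommGroup M] [Module K M]

lemma apply_sub_smul_mem_of_mem_adjoin_of_isNilpotent_sub {f s : End K M}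
    (hs : s ∈ Algebra.adjoin K {f}) (hfs : IsNilpotent (f - s)) {p q : Submodule K M} {a : K}
    (hp : p ∈ f.invtSubmodule) (hq : ∀ x ∈ q, f x - a • x ∈ p) {x : M} (hx : x ∈ q) :
    s x - a • x ∈ p := by
  obtain ⟨P, rfl⟩ : ∃ P, aeval f P = s := by
    simpa [Algebra.adjoin_singleton_eq_range_aeval] using hs
  obtain ⟨k, hk⟩ := hfs
  set c := a - P.eval a
  have hck : c ^ k • x ∈ p := by
    have h := aeval_apply_sub_eval_smul_mem hp hq ((X - P) ^ k) hx
    rw [map_pow, map_sub, aeval_X, hk, eval_pow, eval_sub, eval_X] at h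
    simpa using h
  have hc : c • x ∈ p := by
    rcases eq_or_ne c 0 with hc0 | hc0
    · simp [hc0]
    · have hxp : x ∈ p := by
        simpa [smul_smul, pow_ne_zero k hc0] using p.smul_mem (c ^ k)⁻¹ hck
      exact p.smul_mem c hxp
  convert p.sub_mem (aeval_apply_sub_eval_smul_mem hp hq P hx) hc using 1
  simp only [c, sub_smul]
  abel

lemma mem_adjoin_of_isNilpotent_of_isSemisimple [PerfectField K] [FiniteDimensional K M]
    {n s : End K M} (hn : IsNilpotent n) (hs : s.IsSemisimple) (hc : Commute n s) :
    s ∈ Algebra.adjoin K {n + s} := by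
  obtain ⟨n', hn', s', hs', hn'_nil, hs'_ss, h⟩ := (n + s).exists_isNilpotent_isSemisimple
  have hc' : Commute n' s' := Algebra.commute_of_mem_adjoin_singleton_of_commute hs'
    (Algebra.commute_of_mem_adjoin_self hn').symm
  obtain ⟨-, rfl⟩ := isNilpotent_isSemisimple_unique hn hs hn'_nil hs'_ss hc hc' h
  exact hs'

variable [IsAlgClosed K] [FiniteDimensional K M]

lemma induction_on_maxGenEigenspace (f : End K M) {motive : M → Prop} (zero : motive 0)
    (add : ∀ x y, motive x → motive y → motive (x + y))
    (mem : ∀ μ, ∀ x ∈ f.maxGenEigenspace μ, motive x) (x : M) : motive x := by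
  have hx : x ∈ ⨆ μ, f.maxGenEigenspace μ := by simp [iSup_maxGenEigenspace_eq_top]
  exact Submodule.iSup_induction _ (motive := motive) hx mem zero add

lemma comp_eq_comp_of_isFinitelySemisimple_of_isNilpotent_sub {τ : K →+* K}
    {σ : M →ₛₗ[τ] M} {f s : End K M} (hσ : σ ∘ₛₗ f = f ∘ₛₗ σ) (hfs : Commute f s)
    (hs : s.IsFinitelySemisimple) (hn : IsNilpotent (f - s)) : σ ∘ₛₗ s = s ∘ₛₗ σ := by
  have scalar {μ : K} {x : M} (hx : x ∈ f.maxGenEigenspace μ) : s x = μ • x :=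
    apply_eq_of_mem_of_comm_of_isFinitelySemisimple_of_isNil hx hfs hs hn
  ext x
  induction x using f.induction_on_maxGenEigenspace with
  | zero => simp
  | add x y hx hy => simp only [LinearMap.comp_apply, map_add] at hx hy ⊢; rw [hx, hy]
  | mem μ x hx =>
    simp [scalar hx, scalar (mapsTo_maxGenEigenspace_of_semiconj hσ μ hx)]

end Field

end Module.End

open Module Module.End

section Leibniz

variable {R L : Type*} [CommRing R] [LieRing L] [LieAlgebra R L]

lemma lie_mem_maxGenEigenspace_of_leibniz {D : End R L}
    (hD : ∀ x y, D ⁅x, y⁆ = ⁅D x, y⁆ + ⁅x, D y⁆) {χ₁ χ₂ : R} {x y : L}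
    (hx : x ∈ D.maxGenEigenspace χ₁) (hy : y ∈ D.maxGenEigenspace χ₂) :
    ⁅x, y⁆ ∈ D.maxGenEigenspace (χ₁ + χ₂) := by
  have hshift (x y : L) :
      (D - (χ₁ + χ₂) • 1) ⁅x, y⁆ = ⁅(D - χ₁ • 1) x, y⁆ + ⁅x, (D - χ₂ • 1) y⁆ := by
    simp only [LinearMap.sub_apply, LinearMap.smul_apply, one_apply, sub_lie, lie_sub, smul_lie,
      lie_smul, hD]
    module
  suffices ∀ n a b : ℕ, ∀ x y : L, a + b = n → ((D - χ₁ • 1) ^ a) x = 0 →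
      ((D - χ₂ • 1) ^ b) y = 0 → ((D - (χ₁ + χ₂) • 1) ^ n) ⁅x, y⁆ = 0 by
    obtain ⟨a, ha⟩ := (mem_maxGenEigenspace _ _ _).mp hx
    obtain ⟨b, hb⟩ := (mem_maxGenEigenspace _ _ _).mp hy
    exact (mem_maxGenEigenspace _ _ _).mpr ⟨a + b, this _ a b x y rfl ha hb⟩
  intro n
  induction n with
  | zero =>
    intro a b x y hab hx _
    obtain rfl : a = 0 := by omega
    simp_all
  | succ n ih =>
    rintro (_ | a) (_ | b) x y hab hx hy
    · simp_all
    · simp_all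
    · simp_all
    rw [pow_succ, mul_apply, hshift, map_add,
      ih a (b + 1) _ y (by omega) (by rwa [← mul_apply, ← pow_succ]) hy,
      ih (a + 1) b x _ (by omega) hx (by rwa [← mul_apply, ← pow_succ]), add_zero]

lemma leibniz_of_isFinitelySemisimple_of_isNilpotent_sub {K : Type*} [Field K] [IsAlgClosed K]
    [LieAlgebra K L] [FiniteDimensional K L] {D S : End K L}
    (hD : ∀ x y, D ⁅x, y⁆ = ⁅D x, y⁆ + ⁅x, D y⁆) (hDS : Commute D S)
    (hS : S.IsFinitelySemisimple) (hN : IsNilpotent (D - S)) (x y : L) :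
    S ⁅x, y⁆ = ⁅S x, y⁆ + ⁅x, S y⁆ := by
  have scalar {μ : K} {x : L} (hx : x ∈ D.maxGenEigenspace μ) : S x = μ • x :=
    apply_eq_of_mem_of_comm_of_isFinitelySemisimple_of_isNil hx hDS hS hN
  induction x using D.induction_on_maxGenEigenspace with
  | zero => simp
  | add x₁ x₂ h₁ h₂ => simp only [add_lie, map_add, h₁, h₂]; abel
  | mem χ₁ x hx =>
    induction y using D.induction_on_maxGenEigenspace with
    | zero => simp
    | add y₁ y₂ h₁ h₂ => simp only [lie_add, map_add, h₁, h₂]; abel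
    | mem χ₂ y hy =>
      rw [scalar (lie_mem_maxGenEigenspace_of_leibniz hD hx hy), scalar hx, scalar hy, smul_lie,
        lie_smul, add_smul]

end Leibniz

theorem stmt_1_general {g : Type*} [LieRing g] [LieAlgebra ℂ g] [FiniteDimensional ℂ g]
    (σ : g → g)
    (hσadd : ∀ x y, σ (x + y) = σ x + σ y)
    (hσsmul : ∀ (z : ℂ) (x : g), σ (z • x) = (starRingEnd ℂ z) • σ x)
    (q : LieSubalgebra ℂ g)
    (J S N : Module.End ℂ g)
    (hJder : ∀ x y, J ⁅x, y⁆ = ⁅J x, y⁆ + ⁅x, J y⁆)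
    (hJσ : ∀ x, σ (J x) = J (σ x))
    (hJq : ∀ Z ∈ q, J Z ∈ q)
    (hJcr : ∀ Z ∈ q, Z - Complex.I • J Z ∈ q ∧ σ (Z - Complex.I • J Z) ∈ q)
    (hJSN : J = S + N)
    (hcomm : S ∘ₗ N = N ∘ₗ S)
    (hS : S.IsSemisimple)
    (hN : IsNilpotent N) :
    (∀ x y, S ⁅x, y⁆ = ⁅S x, y⁆ + ⁅x, S y⁆) ∧
    (∀ x, σ (S x) = S (σ x)) ∧
    (∀ Z ∈ q, S Z ∈ q) ∧
    (∀ Z ∈ q, Z - Complex.I • S Z ∈ q ∧ σ (Z - Complex.I • S Z) ∈ q) := by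
  let σₗ : g →ₗ⋆[ℂ] g := { toFun := σ, map_add' := hσadd, map_smul' := hσsmul }
  have hNS : Commute N S := hcomm.symm
  have hJS : Commute J S := hJSN ▸ (Commute.refl S).add_left hNS
  have hJS_nil : IsNilpotent (J - S) := by rwa [hJSN, add_sub_cancel_left]
  have hS_adj : S ∈ Algebra.adjoin ℂ {J} := by
    rw [hJSN, add_comm]
    exact mem_adjoin_of_isNilpotent_of_isSemisimple hN hS hNS
  have hσJ : σₗ ∘ₛₗ J = J ∘ₛₗ σₗ := LinearMap.ext hJσ
  have hq : q.toSubmodule ∈ J.invtSubmodule := hJq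
  let 𝔥 : Submodule ℂ g := q.toSubmodule ⊓ q.toSubmodule.comap σₗ
  have h𝔥 : 𝔥 ∈ J.invtSubmodule := invtSubmodule.inf_mem hq fun x hx => by
    simpa [σₗ, hJσ] using hJq _ hx
  have hJ𝔥 : ∀ Z ∈ q, J Z - (-Complex.I) • Z ∈ 𝔥 := fun Z hZ => by
    convert 𝔥.smul_mem Complex.I (hJcr Z hZ) using 1
    simp only [smul_sub, smul_smul, Complex.I_mul_I]
    module
  have hS_ss := hS.isFinitelySemisimple
  refine ⟨leibniz_of_isFinitelySemisimple_of_isNilpotent_sub hJder hJS hS_ss hJS_nil,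
    LinearMap.congr_fun (comp_eq_comp_of_isFinitelySemisimple_of_isNilpotent_sub hσJ hJS hS_ss
      hJS_nil), fun Z hZ => invtSubmodule_le_of_mem_adjoin hS_adj hq hZ, fun Z hZ => ?_⟩
  change Z - Complex.I • S Z ∈ 𝔥
  convert 𝔥.smul_mem (-Complex.I)
    (apply_sub_smul_mem_of_mem_adjoin_of_isNilpotent_sub hS_adj hJS_nil h𝔥 hJ𝔥 hZ) using 1
  simp only [smul_sub, smul_smul, neg_mul_neg, Complex.I_mul_I]
  module

/-- If `J ∈ Der(𝔤)` satisfies the J-property (condition (1.14)') of a CR algebra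
`(𝔤₀, 𝔮)` (where `𝔤₀` is the real form fixed by the conjugation `σ`), then so does
the semisimple part `S` of the Jordan–Chevalley decomposition `J = S + N`. -/
theorem stmt_1 {g : Type*} [LieRing g] [LieAlgebra ℂ g] [FiniteDimensional ℂ g]
    (σ : g → g)
    (hσadd : ∀ x y, σ (x + y) = σ x + σ y)
    (hσsmul : ∀ (z : ℂ) (x : g), σ (z • x) = (starRingEnd ℂ z) • σ x)
    (hσbracket : ∀ x y, σ ⁅x, y⁆ = ⁅σ x, σ y⁆)
    (hσinv : ∀ x, σ (σ x) = x)
    (q : LieSubalgebra ℂ g)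
    (J S N : Module.End ℂ g)
    (hJder : ∀ x y, J ⁅x, y⁆ = ⁅J x, y⁆ + ⁅x, J y⁆)
    (hJσ : ∀ x, σ (J x) = J (σ x))
    (hJq : ∀ Z ∈ q, J Z ∈ q)
    (hJcr : ∀ Z ∈ q, Z - Complex.I • J Z ∈ q ∧ σ (Z - Complex.I • J Z) ∈ q)
    (hJSN : J = S + N)
    (hcomm : S ∘ₗ N = N ∘ₗ S)
    (hS : S.IsSemisimple)
    (hN : IsNilpotent N) :
    (∀ x y, S ⁅x, y⁆ = ⁅S x, y⁆ + ⁅x, S y⁆) ∧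
    (∀ x, σ (S x) = S (σ x)) ∧
    (∀ Z ∈ q, S Z ∈ q) ∧
    (∀ Z ∈ q, Z - Complex.I • S Z ∈ q ∧ σ (Z - Complex.I • S Z) ∈ q) :=
  stmt_1_general σ hσadd hσsmul q J S N hJder hJσ hJq hJcr hJSN hcomm hS hN
end

section
/- Let 𝔤 be a finite-dimensional complex Lie algebra with a conjugation σ, and let 𝔮 be a complex Lie subalgebra of 𝔤. Let Υ be a ℂ-linear Lie algebra automorphism of 𝔤 with σ∘Υ = Υ∘σ, Υ(𝔮) = 𝔮, and Z − i·Υ(Z) ∈ 𝔮 ∩ σ(𝔮) for every Z ∈ 𝔮. Let 𝔞 be a complex Lie ideal of 𝔤 with σ(𝔞) = 𝔞 and Υ(𝔞) = 𝔞. Then (𝔮 + 𝔞) ∩ (σ(𝔮) + 𝔞) = (𝔮 ∩ σ(𝔮)) + 𝔞. -/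
/-- Compatibility condition for the `𝐀₀`-fibration: if `(𝔤₀,𝔮)` has the
weak-J-property (witnessed by `Υ`) and the ideal `𝔞` is `σ`- and `Υ`-invariant,
then `(𝔮 + 𝔞) ∩ (σ(𝔮) + 𝔞) = (𝔮 ∩ σ(𝔮)) + 𝔞`. -/
theorem stmt_2 {g : Type*} [LieRing g] [LieAlgebra ℂ g] [FiniteDimensional ℂ g]
    (σ : g → g)
    (hσadd : ∀ x y, σ (x + y) = σ x + σ y)
    (hσsmul : ∀ (z : ℂ) (x : g), σ (z • x) = (starRingEnd ℂ z) • σ x)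
    (hσbracket : ∀ x y, σ ⁅x, y⁆ = ⁅σ x, σ y⁆)
    (hσinv : ∀ x, σ (σ x) = x)
    (q : LieSubalgebra ℂ g)
    (Υ : g ≃ₗ⁅ℂ⁆ g)
    (hΥσ : ∀ x, σ (Υ x) = Υ (σ x))
    (hΥq : ∀ x, x ∈ q ↔ Υ x ∈ q)
    (hΥcr : ∀ Z ∈ q, Z - Complex.I • Υ Z ∈ q ∧ σ (Z - Complex.I • Υ Z) ∈ q)
    (a : LieIdeal ℂ g)
    (hσa : ∀ x, x ∈ a ↔ σ x ∈ a)
    (hΥa : ∀ x, x ∈ a ↔ Υ x ∈ a) :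
    ∀ x : g,
      ((∃ u ∈ q, ∃ b ∈ a, x = u + b) ∧ (∃ v ∈ q, ∃ c ∈ a, x = σ v + c)) ↔
      (∃ w, w ∈ q ∧ σ w ∈ q ∧ ∃ d ∈ a, x = w + d) := by
  have hσsub : ∀ x y : g, σ (x - y) = σ x - σ y := by
    intro x y
    have h1 : σ (-y) = -σ y := by
      have := hσsmul (-1) y
      simpa using this
    rw [sub_eq_add_neg, hσadd, h1, sub_eq_add_neg]
  intro x
  constructor
  · rintro ⟨⟨u, hu, b, hb, hxub⟩, ⟨v, hv, c, hc, hxvc⟩⟩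
    obtain ⟨h1, h2⟩ := hΥcr u hu
    obtain ⟨h3, h4⟩ := hΥcr v hv
    refine ⟨(2:ℂ)⁻¹ • ((u - Complex.I • Υ u) + σ (v - Complex.I • Υ v)),
      q.smul_mem _ (q.add_mem h1 h4), ?_,
      (2:ℂ)⁻¹ • ((b - Complex.I • Υ b) + (c + Complex.I • Υ c)), ?_, ?_⟩
    · have : σ ((2:ℂ)⁻¹ • ((u - Complex.I • Υ u) + σ (v - Complex.I • Υ v)))
          = (2:ℂ)⁻¹ • (σ (u - Complex.I • Υ u) + (v - Complex.I • Υ v)) := by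
        rw [hσsmul, hσadd, hσinv]
        simp [map_inv₀, Complex.conj_ofNat, smul_add]
      rw [this]
      exact q.smul_mem _ (q.add_mem h2 h3)
    · refine a.smul_mem _ (a.add_mem ?_ ?_)
      · exact sub_mem hb (a.smul_mem _ ((hΥa b).mp hb))
      · exact add_mem hc (a.smul_mem _ ((hΥa c).mp hc))
    · have hs : σ (v - Complex.I • Υ v) = σ v + Complex.I • Υ (σ v) := by
        rw [hσsub, hσsmul, hΥσ]
        simp [Complex.conj_I, sub_eq_add_neg, neg_smul]
      rw [hxub] at hxvc ⊢
      have hσv : σ v = u + b - c := eq_sub_of_add_eq hxvc.symm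
      have hΥadd : ∀ x y : g, Υ (x + y) = Υ x + Υ y := fun x y =>
        Υ.toLinearEquiv.map_add x y
      have hΥsub : ∀ x y : g, Υ (x - y) = Υ x - Υ y := fun x y =>
        Υ.toLinearEquiv.map_sub x y
      rw [hs, hσv, hΥsub, hΥadd]
      module
  · rintro ⟨w, hw, hsw, d, hd, hx⟩
    exact ⟨⟨w, hw, d, hd, hx⟩, ⟨σ w, hsw, d, hd, by rw [hσinv]; exact hx⟩⟩
end

section
/- Let 𝔤 be a finite-dimensional complex Lie algebra with a conjugation σ, and let 𝔮 be a complex Lie subalgebra of 𝔤. Let Υ be a ℂ-linear Lie algebra automorphism of 𝔤 with σ∘Υ = Υ∘σ, Υ(𝔮) = 𝔮, and Z − i·Υ(Z) ∈ 𝔮 ∩ σ(𝔮) for every Z ∈ 𝔮. Let 𝔞 be a complex Lie ideal of 𝔤 with σ(𝔞) = 𝔞 and Υ(𝔞) = 𝔞. Then: (1) Υ(𝔮 + 𝔞) = 𝔮 + 𝔞 and W − i·Υ(W) ∈ (𝔮 + 𝔞) ∩ σ(𝔮 + 𝔞) for every W ∈ 𝔮 + 𝔞; (2) Υ(𝔮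 ∩ 𝔞) = 𝔮 ∩ 𝔞 and W − i·Υ(W) ∈ (𝔮 ∩ 𝔞) ∩ σ(𝔮 ∩ 𝔞) for every W ∈ 𝔮 ∩ 𝔞. -/
/-- If `(𝔤₀,𝔮)` has the weak-J-property (witnessed by `Υ`) and the ideal `𝔞`
is `σ`- and `Υ`-invariant, then both the base `(𝔤₀, 𝔮 + 𝔞)` and the fiber
`(𝔞₀, 𝔮 ∩ 𝔞)` of the `𝐀₀`-fibration enjoy the weak-J-property, witnessed by
the same `Υ`. -/
theorem stmt_3 {g : Type*} [LieRing g] [LieAlgebra ℂ g] [FiniteDimensional ℂ g]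
    (σ : g → g)
    (hσadd : ∀ x y, σ (x + y) = σ x + σ y)
    (hσsmul : ∀ (z : ℂ) (x : g), σ (z • x) = (starRingEnd ℂ z) • σ x)
    (hσbracket : ∀ x y, σ ⁅x, y⁆ = ⁅σ x, σ y⁆)
    (hσinv : ∀ x, σ (σ x) = x)
    (q : LieSubalgebra ℂ g)
    (Υ : g ≃ₗ⁅ℂ⁆ g)
    (hΥσ : ∀ x, σ (Υ x) = Υ (σ x))
    (hΥq : ∀ x, x ∈ q ↔ Υ x ∈ q)
    (hΥcr : ∀ Z ∈ q, Z - Complex.I • Υ Z ∈ q ∧ σ (Z - Complex.I • Υ Z) ∈ q)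
    (a : LieIdeal ℂ g)
    (hσa : ∀ x, x ∈ a ↔ σ x ∈ a)
    (hΥa : ∀ x, x ∈ a ↔ Υ x ∈ a) :
    -- (1) the base 𝔮 + 𝔞
    ((∀ x : g, (∃ u ∈ q, ∃ b ∈ a, x = u + b) ↔ (∃ u ∈ q, ∃ b ∈ a, Υ x = u + b)) ∧
     (∀ W : g, (∃ u ∈ q, ∃ b ∈ a, W = u + b) →
        (∃ u ∈ q, ∃ b ∈ a, W - Complex.I • Υ W = u + b) ∧
        (∃ u ∈ q, ∃ b ∈ a, σ (W - Complex.I • Υ W) = u + b))) ∧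
    -- (2) the fiber 𝔮 ∩ 𝔞
    ((∀ x : g, (x ∈ q ∧ x ∈ a) ↔ (Υ x ∈ q ∧ Υ x ∈ a)) ∧
     (∀ W : g, W ∈ q → W ∈ a →
        (W - Complex.I • Υ W ∈ q ∧ W - Complex.I • Υ W ∈ a) ∧
        (σ (W - Complex.I • Υ W) ∈ q ∧ σ (W - Complex.I • Υ W) ∈ a))) := by
  have hadd : ∀ x y : g, Υ (x + y) = Υ x + Υ y := fun x y => Υ.toLinearEquiv.map_add x y
  have hsub : ∀ x : g, x - Complex.I • Υ x = x + (-Complex.I) • Υ x := by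
    intro x; rw [neg_smul, sub_eq_add_neg]
  refine ⟨⟨?_, ?_⟩, ⟨?_, ?_⟩⟩
  · intro x
    constructor
    · rintro ⟨u, hu, b, hb, rfl⟩
      exact ⟨Υ u, (hΥq u).1 hu, Υ b, (hΥa b).1 hb, hadd u b⟩
    · rintro ⟨u, hu, b, hb, h⟩
      refine ⟨Υ.symm u, ?_, Υ.symm b, ?_, ?_⟩
      · exact (hΥq _).2 (by rw [Υ.apply_symm_apply]; exact hu)
      · exact (hΥa _).2 (by rw [Υ.apply_symm_apply]; exact hb)
      · have := congrArg Υ.symm h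
        rw [Υ.symm_apply_apply] at this
        rw [this]; exact Υ.symm.toLinearEquiv.map_add u b
  · rintro W ⟨u, hu, b, hb, rfl⟩
    constructor
    · refine ⟨u - Complex.I • Υ u, (hΥcr u hu).1, b - Complex.I • Υ b, ?_, ?_⟩
      · exact a.sub_mem hb (a.smul_mem _ ((hΥa b).1 hb))
      · rw [hadd, smul_add]; abel
    · refine ⟨σ (u - Complex.I • Υ u), (hΥcr u hu).2, σ (b - Complex.I • Υ b), ?_, ?_⟩
      · exact (hσa _).1 (a.sub_mem hb (a.smul_mem _ ((hΥa b).1 hb)))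
      · rw [← hσadd]; congr 1
        rw [hadd, smul_add]; abel
  · intro x
    constructor
    · rintro ⟨h1, h2⟩; exact ⟨(hΥq x).1 h1, (hΥa x).1 h2⟩
    · rintro ⟨h1, h2⟩; exact ⟨(hΥq x).2 h1, (hΥa x).2 h2⟩
  · intro W hq ha
    have hsa : W - Complex.I • Υ W ∈ a := a.sub_mem ha (a.smul_mem _ ((hΥa W).1 ha))
    exact ⟨⟨(hΥcr W hq).1, hsa⟩, ⟨(hΥcr W hq).2, (hσa _).1 hsa⟩⟩
end

section
/- Let 𝔤 be a finite-dimensional complex Lie algebra with a conjugation σ and fixed-point set 𝔤₀, and let 𝔮 be a complex Lie subalgebra of 𝔤 which is weakly nondegenerate: every complex Lie subalgebra 𝔮' of 𝔤 with 𝔮 ⊆ 𝔮' ⊆ 𝔮 + σ(𝔮) is equal to 𝔮. Set 𝔦₀ = 𝔮 ∩ 𝔤₀. Let 𝔦₀' be an ℝ-linear subspace of 𝔤₀ with 𝔦₀ ⊆ 𝔦₀', [𝔦₀', 𝔦₀'] ⊆ 𝔦₀, and [X, 𝔮] ⊆ 𝔮 for every X ∈ 𝔦₀'. Then 𝔦₀'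 ∩ (𝔮 + σ(𝔮)) = 𝔦₀. -/
/-- If `(𝔤₀,𝔮)` is weakly nondegenerate and `𝔦₀'` is an ℝ-subspace of the real
form `𝔤₀` with `𝔦₀ ⊆ 𝔦₀'`, `[𝔦₀',𝔦₀'] ⊆ 𝔦₀` and `𝔦₀'` normalizing `𝔮`, then
`𝔦₀' ∩ (𝔮 + σ(𝔮)) = 𝔦₀`: the fibers of the corresponding `𝔤₀`-equivariant CR
fibration are totally real. -/
theorem stmt_4 {g : Type*} [LieRing g] [LieAlgebra ℂ g] [FiniteDimensional ℂ g]
    (σ : g → g)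
    (hσadd : ∀ x y, σ (x + y) = σ x + σ y)
    (hσsmul : ∀ (z : ℂ) (x : g), σ (z • x) = (starRingEnd ℂ z) • σ x)
    (hσbracket : ∀ x y, σ ⁅x, y⁆ = ⁅σ x, σ y⁆)
    (hσinv : ∀ x, σ (σ x) = x)
    (q : LieSubalgebra ℂ g)
    (hwnd : ∀ q' : LieSubalgebra ℂ g,
      q ≤ q' → (∀ x ∈ q', ∃ u ∈ q, ∃ v ∈ q, x = u + σ v) → q' = q)
    (i₀' : Submodule ℝ g)
    (hreal : ∀ X ∈ i₀', σ X = X)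
    (hsub : ∀ X : g, X ∈ q → σ X = X → X ∈ i₀')
    (hbr : ∀ X ∈ i₀', ∀ Y ∈ i₀', ⁅X, Y⁆ ∈ q ∧ σ ⁅X, Y⁆ = ⁅X, Y⁆)
    (hnorm : ∀ X ∈ i₀', ∀ Z ∈ q, ⁅X, Z⁆ ∈ q) :
    ∀ X : g, (X ∈ i₀' ∧ ∃ u ∈ q, ∃ v ∈ q, X = u + σ v) ↔ (X ∈ q ∧ σ X = X) := by
  have hσ0 : σ 0 = 0 := by
    have h := hσadd 0 0
    simp only [add_zero] at h
    exact (left_eq_add.mp h)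
  set S : Set g := {x | x ∈ i₀' ∧ ∃ u ∈ q, ∃ v ∈ q, x = u + σ v} with hS
  set T : Set g := (q : Set g) ∪ S with hT
  set M : Submodule ℂ g := Submodule.span ℂ T with hM
  have hqM : ∀ x ∈ q, x ∈ M := fun x hx => Submodule.subset_span (Or.inl hx)
  -- decomposition property on M
  have hdecomp : ∀ x ∈ M, ∃ u ∈ q, ∃ v ∈ q, x = u + σ v := by
    intro x hx
    induction hx using Submodule.span_induction with
    | mem x hxT =>
      rcases hxT with hxq | hxS
      · exact ⟨x, hxq, 0, q.zero_mem, by rw [hσ0, add_zero]⟩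
      · exact hxS.2
    | zero => exact ⟨0, q.zero_mem, 0, q.zero_mem, by rw [hσ0, add_zero]⟩
    | add x y hx hy ihx ihy =>
      obtain ⟨u1, hu1, v1, hv1, h1⟩ := ihx
      obtain ⟨u2, hu2, v2, hv2, h2⟩ := ihy
      exact ⟨u1 + u2, q.add_mem hu1 hu2, v1 + v2, q.add_mem hv1 hv2, by
        rw [h1, h2, hσadd]; abel⟩
    | smul z x hx ihx =>
      obtain ⟨u, hu, v, hv, h⟩ := ihx
      refine ⟨z • u, q.smul_mem z hu, (starRingEnd ℂ z) • v, q.smul_mem _ hv, ?_⟩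
      rw [h, smul_add, hσsmul]
      simp
  -- bracket closure on generators
  have hTT : ∀ x ∈ T, ∀ y ∈ T, ⁅x, y⁆ ∈ q := by
    rintro x (hxq | hxS) y (hyq | hyS)
    · exact q.lie_mem hxq hyq
    · rw [← lie_skew]
      exact q.neg_mem (hnorm y hyS.1 x hxq)
    · exact hnorm x hxS.1 y hyq
    · exact (hbr x hxS.1 y hyS.1).1
  -- bracket closure on M
  have hlie1 : ∀ x ∈ T, ∀ y ∈ M, ⁅x, y⁆ ∈ M := by
    intro x hxT y hy
    induction hy using Submodule.span_induction with
    | mem y hyT => exact hqM _ (hTT x hxT y hyT)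
    | zero => simp
    | add y z hy hz ihy ihz => rw [lie_add]; exact M.add_mem ihy ihz
    | smul z y hy ihy => rw [lie_smul]; exact M.smul_mem z ihy
  have hlie : ∀ x ∈ M, ∀ y ∈ M, ⁅x, y⁆ ∈ M := by
    intro x hx
    induction hx using Submodule.span_induction with
    | mem x hxT => exact hlie1 x hxT
    | zero => intro y hy; simp
    | add x z hx hz ihx ihz =>
      intro y hy; rw [add_lie]; exact M.add_mem (ihx y hy) (ihz y hy)
    | smul z x hx ihx =>
      intro y hy; rw [smul_lie]; exact M.smul_mem z (ihx y hy)
  set q' : LieSubalgebra ℂ g :=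
    { M with lie_mem' := fun {x y} hx hy => hlie x hx y hy } with hq'
  have hle : q ≤ q' := fun x hx => hqM x hx
  have heq : q' = q := hwnd q' hle (fun x hx => hdecomp x hx)
  intro X
  constructor
  · rintro ⟨hXi, hXd⟩
    have hXS : X ∈ S := ⟨hXi, hXd⟩
    have hXM : X ∈ q' := Submodule.subset_span (Or.inr hXS)
    rw [heq] at hXM
    exact ⟨hXM, hreal X hXi⟩
  · rintro ⟨hXq, hXfix⟩
    exact ⟨hsub X hXq hXfix, 0, q.zero_mem, X, hXq, by rw [hXfix, zero_add]⟩
end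

section
/- Let 𝔤 be a finite-dimensional complex Lie algebra with a conjugation σ and fixed-point set 𝔤₀, let 𝔮 be a complex Lie subalgebra of 𝔤, and set 𝔦₀ = 𝔮 ∩ 𝔤₀. Let 𝔦₀' be an ℝ-linear subspace of 𝔤₀ with 𝔦₀ ⊆ 𝔦₀', [𝔦₀', 𝔦₀'] ⊆ 𝔦₀, and [X, 𝔮] ⊆ 𝔮 for every X ∈ 𝔦₀'. Then 𝔮' = 𝔮 + (the ℂ-linear span of 𝔦₀') is a complex Lie subalgebra of 𝔤, 𝔮 is a Lie ideal of 𝔮', and [𝔮', 𝔮'] ⊆ 𝔮 (the quotient 𝔮'/𝔮 is abelian). -/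
/-- Construction of the `G₀`-closure of a CR algebra: with `𝔦₀'` an ℝ-subspace
of the real form `𝔤₀` with `𝔦₀ ⊆ 𝔦₀'`, `[𝔦₀',𝔦₀'] ⊆ 𝔦₀` and `𝔦₀'` normalizing
`𝔮`, the space `𝔮' = 𝔮 + ℂ·𝔦₀'` is a complex Lie subalgebra of `𝔤`, `𝔮` is a
Lie ideal of `𝔮'`, and `[𝔮',𝔮'] ⊆ 𝔮` (the quotient `𝔮'/𝔮` is abelian). -/
theorem stmt_5 {g : Type*} [LieRing g] [LieAlgebra ℂ g] [FiniteDimensional ℂ g]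
    (σ : g → g)
    (hσadd : ∀ x y, σ (x + y) = σ x + σ y)
    (hσsmul : ∀ (z : ℂ) (x : g), σ (z • x) = (starRingEnd ℂ z) • σ x)
    (hσbracket : ∀ x y, σ ⁅x, y⁆ = ⁅σ x, σ y⁆)
    (hσinv : ∀ x, σ (σ x) = x)
    (q : LieSubalgebra ℂ g)
    (i₀' : Submodule ℝ g)
    (hreal : ∀ X ∈ i₀', σ X = X)
    (hsub : ∀ X : g, X ∈ q → σ X = X → X ∈ i₀')
    (hbr : ∀ X ∈ i₀', ∀ Y ∈ i₀', ⁅X, Y⁆ ∈ q ∧ σ ⁅X, Y⁆ = ⁅X, Y⁆)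
    (hnorm : ∀ X ∈ i₀', ∀ Z ∈ q, ⁅X, Z⁆ ∈ q) :
    -- 𝔮' = 𝔮 + span_ℂ 𝔦₀' is closed under the Lie bracket
    (∀ x ∈ q.toSubmodule ⊔ Submodule.span ℂ (i₀' : Set g),
       ∀ y ∈ q.toSubmodule ⊔ Submodule.span ℂ (i₀' : Set g),
         ⁅x, y⁆ ∈ q.toSubmodule ⊔ Submodule.span ℂ (i₀' : Set g)) ∧
    -- 𝔮 is a Lie ideal of 𝔮'
    (∀ x ∈ q.toSubmodule ⊔ Submodule.span ℂ (i₀' : Set g),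
       ∀ y ∈ q, ⁅x, y⁆ ∈ q) ∧
    -- [𝔮',𝔮'] ⊆ 𝔮, i.e. the quotient 𝔮'/𝔮 is abelian
    (∀ x ∈ q.toSubmodule ⊔ Submodule.span ℂ (i₀' : Set g),
       ∀ y ∈ q.toSubmodule ⊔ Submodule.span ℂ (i₀' : Set g),
         ⁅x, y⁆ ∈ q) := by

  -- key lemma: span normalizes q
  have hspan_q : ∀ x ∈ Submodule.span ℂ (i₀' : Set g), ∀ z ∈ q, ⁅x, z⁆ ∈ q := by
    intro x hx z hz
    induction hx using Submodule.span_induction with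
    | mem w hw => exact hnorm w hw z hz
    | zero => simpa using q.zero_mem
    | add a b _ _ ha hb => rw [add_lie]; exact q.add_mem ha hb
    | smul c a _ ha => rw [smul_lie]; exact q.smul_mem c ha
  have hspan_span : ∀ x ∈ Submodule.span ℂ (i₀' : Set g),
      ∀ y ∈ Submodule.span ℂ (i₀' : Set g), ⁅x, y⁆ ∈ q := by
    intro x hx
    induction hx using Submodule.span_induction with
    | mem w hw =>
      intro y hy
      induction hy using Submodule.span_induction with
      | mem v hv => exact (hbr w hw v hv).1
      | zero => simpa using q.zero_mem
      | add a b _ _ ha hb => rw [lie_add]; exact q.add_mem ha hb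
      | smul c a _ ha => rw [lie_smul]; exact q.smul_mem c ha
    | zero => intro y hy; simpa using q.zero_mem
    | add a b _ _ ha hb =>
      intro y hy; rw [add_lie]; exact q.add_mem (ha y hy) (hb y hy)
    | smul c a _ ha =>
      intro y hy; rw [smul_lie]; exact q.smul_mem c (ha y hy)
  have hmain : ∀ x ∈ q.toSubmodule ⊔ Submodule.span ℂ (i₀' : Set g),
      ∀ y ∈ q.toSubmodule ⊔ Submodule.span ℂ (i₀' : Set g), ⁅x, y⁆ ∈ q := by
    intro x hx y hy
    obtain ⟨a, ha, b, hb, rfl⟩ := Submodule.mem_sup.mp hx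
    obtain ⟨c, hc, d, hd, rfl⟩ := Submodule.mem_sup.mp hy
    have h1 : ⁅a, c⁆ ∈ q := q.lie_mem ha hc
    have h2 : ⁅a, d⁆ ∈ q := by
      have := hspan_q d hd a ha
      rw [← lie_skew]; exact q.neg_mem this
    have h3 : ⁅b, c⁆ ∈ q := hspan_q b hb c hc
    have h4 : ⁅b, d⁆ ∈ q := hspan_span b hb d hd
    rw [add_lie, lie_add, lie_add]
    exact q.add_mem (q.add_mem h1 h2) (q.add_mem h3 h4)
  have hle : q.toSubmodule ≤ q.toSubmodule ⊔ Submodule.span ℂ (i₀' : Set g) :=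
    le_sup_left
  refine ⟨fun x hx y hy => hle (hmain x hx y hy), ?_, hmain⟩
  intro x hx y hy
  exact hmain x hx y (hle hy)
end

section
/- Let V be a real vector space, R a finite subset of V ∖ {0} with R = −R, and τ : V → V a linear bijection with τ∘τ = id and τ(R) = R. Let Q ⊆ R be closed (α, β ∈ Q and α + β ∈ R imply α + β ∈ Q) and satisfy Q ∩ τ(Q) = ∅ and Q ∪ τ(Q) = R. Set Q^r = {α ∈ Q : −α ∈ Q} and Q^n = Q ∖ Q^r. Then: (1) the sets Q^r ∪ τ(Q) and Q^r ∪ τ(Q^n) are closed; (2) for all α, β ∈ Q^r, α + τ(β) ∉ R (Q^r and τ(Q)^r are strongly orthogonal); (3) the set P = Q ∪ τ(Q^r) is closed, satisfies P ∪ (−P) = R (P is parabolic), and {α ∈ P : −α ∉ P} = Q^n. -/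
/-- A subset `S` of `R` is closed if `a, b ∈ S` and `a + b ∈ R` imply `a + b ∈ S`. -/
def IsClosedRootSubset {V : Type*} [AddCommGroup V] (R S : Set V) : Prop :=
  ∀ a ∈ S, ∀ b ∈ S, a + b ∈ R → a + b ∈ S

/-- Combinatorial content of Lemma 5.3: if `Q` is a closed subset of `R` with
`Q ∩ τ(Q) = ∅` and `Q ∪ τ(Q) = R`, with `Q^r = {α ∈ Q | -α ∈ Q}` and
`Q^n = Q \ Q^r`, then (1) `Q^r ∪ τ(Q)` and `Q^r ∪ τ(Q^n)` are closed;
(2) `Q^r` and `τ(Q)^r` are strongly orthogonal; (3) `P = Q ∪ τ(Q^r)` is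
parabolic with `{α ∈ P | -α ∉ P} = Q^n`. -/
theorem stmt_8 {V : Type*} [AddCommGroup V] [Module ℝ V]
    (R : Set V) (hRfin : R.Finite) (hR0 : (0 : V) ∉ R) (hRneg : ∀ α ∈ R, -α ∈ R)
    (τ : V →ₗ[ℝ] V) (hτinv : ∀ x, τ (τ x) = x) (hτR : τ '' R = R)
    (Q : Set V) (hQR : Q ⊆ R)
    (hQclosed : IsClosedRootSubset R Q)
    (hdisj : Q ∩ τ '' Q = ∅) (hcover : Q ∪ τ '' Q = R) :
    -- (1)
    (IsClosedRootSubset R ({α ∈ Q | -α ∈ Q} ∪ τ '' Q) ∧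
     IsClosedRootSubset R ({α ∈ Q | -α ∈ Q} ∪ τ '' (Q \ {α ∈ Q | -α ∈ Q}))) ∧
    -- (2)
    (∀ α ∈ {α ∈ Q | -α ∈ Q}, ∀ β ∈ {α ∈ Q | -α ∈ Q}, α + τ β ∉ R) ∧
    -- (3)
    (IsClosedRootSubset R (Q ∪ τ '' {α ∈ Q | -α ∈ Q}) ∧
     (Q ∪ τ '' {α ∈ Q | -α ∈ Q}) ∪
       {α | -α ∈ Q ∪ τ '' {α ∈ Q | -α ∈ Q}} = R ∧
     {α ∈ Q ∪ τ '' {α ∈ Q | -α ∈ Q} | -α ∉ Q ∪ τ '' {α ∈ Q | -α ∈ Q}}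
       = Q \ {α ∈ Q | -α ∈ Q}) := by
  -- basic helper facts
  have himg : ∀ (S : Set V) (x : V), x ∈ τ '' S ↔ τ x ∈ S := by
    intro S x
    constructor
    · rintro ⟨s, hs, rfl⟩; rwa [hτinv]
    · intro h; exact ⟨τ x, h, hτinv x⟩
  have hmemR : ∀ x, x ∈ R → τ x ∈ R := by
    intro x hx
    have : τ x ∈ τ '' R := ⟨x, hx, rfl⟩
    rwa [hτR] at this
  have hmemR' : ∀ x, τ x ∈ R → x ∈ R := by
    intro x hx
    have := hmemR _ hx
    rwa [hτinv] at this
  have hdis : ∀ x ∈ Q, τ x ∉ Q := by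
    intro x hx hτx
    have : x ∈ Q ∩ τ '' Q := ⟨hx, (himg Q x).2 hτx⟩
    rw [hdisj] at this; exact this
  have hcov : ∀ x ∈ R, x ∉ Q → τ x ∈ Q := by
    intro x hx hxQ
    have hx' : x ∈ Q ∪ τ '' Q := hcover ▸ hx
    rcases hx' with h | h
    · exact absurd h hxQ
    · exact (himg Q x).1 h
  have hτadd : ∀ a b : V, τ (a + τ b) = τ a + b := by
    intro a b; rw [map_add, hτinv]
  -- claim (2)
  have claim2 : ∀ α ∈ Q, -α ∈ Q → ∀ β ∈ Q, -β ∈ Q → α + τ β ∉ R := by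
    intro α hα hnα β hβ hnβ hsum
    by_cases h : α + τ β ∈ Q
    · have hτβR : τ β ∈ R := hmemR β (hQR hβ)
      have e : (α + τ β) + (-α) = τ β := by abel
      have hr : (α + τ β) + (-α) ∈ R := by rw [e]; exact hτβR
      have := hQclosed _ h _ hnα hr
      rw [e] at this
      exact hdis β hβ this
    · have h' : τ (α + τ β) ∈ Q := hcov _ hsum h
      rw [hτadd] at h'
      have hταR : τ α ∈ R := hmemR α (hQR hα)
      have e : (τ α + β) + (-β) = τ α := by abel
      have hr : (τ α + β) + (-β) ∈ R := by rw [e]; exact hταR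
      have := hQclosed _ h' _ hnβ hr
      rw [e] at this
      exact hdis α hα this
  -- mixed case: a ∈ Q^r, b ∈ Q, a + τ b ∈ R implies τ(a + τ b) ∈ Q^n
  have mixed : ∀ a ∈ Q, -a ∈ Q → ∀ b ∈ Q, a + τ b ∈ R →
      τ (a + τ b) ∈ Q ∧ -(τ (a + τ b)) ∉ Q := by
    intro a ha hna b hb hsum
    by_cases h : a + τ b ∈ Q
    · exfalso
      have hτbR : τ b ∈ R := hmemR b (hQR hb)
      have e : (a + τ b) + (-a) = τ b := by abel
      have hr : (a + τ b) + (-a) ∈ R := by rw [e]; exact hτbR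
      have := hQclosed _ h _ hna hr
      rw [e] at this
      exact hdis b hb this
    · have h' : τ (a + τ b) ∈ Q := hcov _ hsum h
      refine ⟨h', fun hneg => ?_⟩
      have hna' : -(-a) ∈ Q := by rwa [neg_neg]
      have hcon := claim2 (-a) hna hna' (τ (a + τ b)) h' hneg
      rw [hτinv] at hcon
      have e : -a + (a + τ b) = τ b := by abel
      rw [e] at hcon
      exact hcon (hmemR b (hQR hb))
  -- Q^r is "closed together with negatives"
  have hQrclosed : ∀ a ∈ Q, -a ∈ Q → ∀ b ∈ Q, -b ∈ Q → a + b ∈ R →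
      a + b ∈ Q ∧ -(a + b) ∈ Q := by
    intro a ha hna b hb hnb hsum
    refine ⟨hQclosed _ ha _ hb hsum, ?_⟩
    have hr : -a + -b ∈ R := by
      have := hRneg _ hsum; rwa [neg_add] at this
    have := hQclosed _ hna _ hnb hr
    rwa [← neg_add] at this
  -- sum with a Q^n element stays in Q^n
  have hQnsum : ∀ α ∈ Q, ∀ β ∈ Q, -β ∉ Q → α + β ∈ Q → -(α + β) ∉ Q := by
    intro α hα β hβ hnβ hs hneg
    have hβR : -β ∈ R := hRneg β (hQR hβ)
    have e : -(α + β) + α = -β := by abel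
    have hr : -(α + β) + α ∈ R := by rw [e]; exact hβR
    have := hQclosed _ hneg _ hα hr
    rw [e] at this
    exact hnβ this
  -- a ∈ Q plus τ of a Q^r element lands in Q
  have mixed3 : ∀ a ∈ Q, ∀ β ∈ Q, -β ∈ Q → a + τ β ∈ R → a + τ β ∈ Q := by
    intro a ha β hβ hnβ hsum
    by_cases h : a + τ β ∈ Q
    · exact h
    · exfalso
      have h' : τ (a + τ β) ∈ Q := hcov _ hsum h
      rw [hτadd] at h'
      have hτaR : τ a ∈ R := hmemR a (hQR ha)
      have e : (τ a + β) + (-β) = τ a := by abel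
      have hr : (τ a + β) + (-β) ∈ R := by rw [e]; exact hτaR
      have := hQclosed _ h' _ hnβ hr
      rw [e] at this
      exact hdis a ha this
  -- τ Q is closed
  have hτQclosed : ∀ a, τ a ∈ Q → ∀ b, τ b ∈ Q → a + b ∈ R → τ (a + b) ∈ Q := by
    intro a hτa b hτb hsum
    have hr : τ a + τ b ∈ R := by
      have := hmemR _ hsum; rwa [map_add] at this
    have := hQclosed _ hτa _ hτb hr
    rwa [map_add]
  -- membership characterisation for Q^n
  have hQn : ∀ x, x ∈ Q \ {α ∈ Q | -α ∈ Q} ↔ x ∈ Q ∧ -x ∉ Q := by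
    intro x; constructor
    · rintro ⟨hx, hx'⟩; exact ⟨hx, fun h => hx' ⟨hx, h⟩⟩
    · rintro ⟨hx, hn⟩; exact ⟨hx, fun h => hn h.2⟩
  -- Goal (1a)
  have goal1a : IsClosedRootSubset R ({α ∈ Q | -α ∈ Q} ∪ τ '' Q) := by
    intro a ha b hb hsum
    rcases ha with ⟨haQ, hnaQ⟩ | haτ
    · rcases hb with ⟨hbQ, hnbQ⟩ | hbτ
      · obtain ⟨h1, h2⟩ := hQrclosed a haQ hnaQ b hbQ hnbQ hsum
        exact Or.inl ⟨h1, h2⟩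
      · have hτb : τ b ∈ Q := (himg Q b).1 hbτ
        have hsum' : a + τ (τ b) ∈ R := by rwa [hτinv]
        obtain ⟨h1, _⟩ := mixed a haQ hnaQ (τ b) hτb hsum'
        rw [hτinv] at h1
        exact Or.inr ((himg Q _).2 h1)
    · rcases hb with ⟨hbQ, hnbQ⟩ | hbτ
      · have hτa : τ a ∈ Q := (himg Q a).1 haτ
        have hsum' : b + τ (τ a) ∈ R := by rw [hτinv, add_comm]; exact hsum
        obtain ⟨h1, _⟩ := mixed b hbQ hnbQ (τ a) hτa hsum'
        rw [hτinv, add_comm b a] at h1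
        exact Or.inr ((himg Q _).2 h1)
      · have := hτQclosed a ((himg Q a).1 haτ) b ((himg Q b).1 hbτ) hsum
        exact Or.inr ((himg Q _).2 this)
  -- Goal (1b)
  have goal1b : IsClosedRootSubset R
      ({α ∈ Q | -α ∈ Q} ∪ τ '' (Q \ {α ∈ Q | -α ∈ Q})) := by
    intro a ha b hb hsum
    rcases ha with ⟨haQ, hnaQ⟩ | haτ
    · rcases hb with ⟨hbQ, hnbQ⟩ | hbτ
      · obtain ⟨h1, h2⟩ := hQrclosed a haQ hnaQ b hbQ hnbQ hsum
        exact Or.inl ⟨h1, h2⟩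
      · obtain ⟨hτbQ, hτbn⟩ := (hQn _).1 ((himg _ b).1 hbτ)
        have hsum' : a + τ (τ b) ∈ R := by rwa [hτinv]
        obtain ⟨h1, h2⟩ := mixed a haQ hnaQ (τ b) hτbQ hsum'
        rw [hτinv] at h1 h2
        exact Or.inr ((himg _ _).2 ((hQn _).2 ⟨h1, h2⟩))
    · rcases hb with ⟨hbQ, hnbQ⟩ | hbτ
      · obtain ⟨hτaQ, hτan⟩ := (hQn _).1 ((himg _ a).1 haτ)
        have hsum' : b + τ (τ a) ∈ R := by rw [hτinv, add_comm]; exact hsum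
        obtain ⟨h1, h2⟩ := mixed b hbQ hnbQ (τ a) hτaQ hsum'
        rw [hτinv, add_comm b a] at h1 h2
        exact Or.inr ((himg _ _).2 ((hQn _).2 ⟨h1, h2⟩))
      · obtain ⟨hτaQ, hτan⟩ := (hQn _).1 ((himg _ a).1 haτ)
        obtain ⟨hτbQ, hτbn⟩ := (hQn _).1 ((himg _ b).1 hbτ)
        have hs : τ (a + b) ∈ Q := by
          rw [map_add]
          exact hQclosed _ hτaQ _ hτbQ (by rw [← map_add]; exact hmemR _ hsum)
        have hn : -(τ (a + b)) ∉ Q := by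
          rw [map_add]
          exact hQnsum (τ a) hτaQ (τ b) hτbQ hτbn (by rw [← map_add]; exact hs)
        exact Or.inr ((himg _ _).2 ((hQn _).2 ⟨hs, hn⟩))
  -- Goal (2)
  have goal2 : ∀ α ∈ {α ∈ Q | -α ∈ Q}, ∀ β ∈ {α ∈ Q | -α ∈ Q}, α + τ β ∉ R := by
    rintro α ⟨hα, hnα⟩ β ⟨hβ, hnβ⟩
    exact claim2 α hα hnα β hβ hnβ
  -- Goal (3a)
  have goal3a : IsClosedRootSubset R (Q ∪ τ '' {α ∈ Q | -α ∈ Q}) := by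
    intro a ha b hb hsum
    rcases ha with haQ | haτ
    · rcases hb with hbQ | hbτ
      · exact Or.inl (hQclosed _ haQ _ hbQ hsum)
      · obtain ⟨hτb, hτbn⟩ : τ b ∈ Q ∧ -(τ b) ∈ Q := (himg _ b).1 hbτ
        have hsum' : a + τ (τ b) ∈ R := by rwa [hτinv]
        have := mixed3 a haQ (τ b) hτb hτbn hsum'
        rw [hτinv] at this
        exact Or.inl this
    · rcases hb with hbQ | hbτ
      · obtain ⟨hτa, hτan⟩ : τ a ∈ Q ∧ -(τ a) ∈ Q := (himg _ a).1 haτ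
        have hsum' : b + τ (τ a) ∈ R := by rw [hτinv, add_comm]; exact hsum
        have := mixed3 b hbQ (τ a) hτa hτan hsum'
        rw [hτinv, add_comm b a] at this
        exact Or.inl this
      · obtain ⟨hτa, hτan⟩ : τ a ∈ Q ∧ -(τ a) ∈ Q := (himg _ a).1 haτ
        obtain ⟨hτb, hτbn⟩ : τ b ∈ Q ∧ -(τ b) ∈ Q := (himg _ b).1 hbτ
        have hRs : τ a + τ b ∈ R := by rw [← map_add]; exact hmemR _ hsum
        obtain ⟨h1, h2⟩ := hQrclosed (τ a) hτa hτan (τ b) hτb hτbn hRs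
        refine Or.inr ((himg _ _).2 ?_)
        rw [map_add]
        exact ⟨h1, h2⟩
  -- Goal (3b)
  have goal3b : (Q ∪ τ '' {α ∈ Q | -α ∈ Q}) ∪
      {α | -α ∈ Q ∪ τ '' {α ∈ Q | -α ∈ Q}} = R := by
    ext x
    constructor
    · rintro ((hx | hx) | hx)
      · exact hQR hx
      · obtain ⟨hτx, _⟩ : τ x ∈ Q ∧ -(τ x) ∈ Q := (himg _ x).1 hx
        exact hmemR' x (hQR hτx)
      · rcases hx with h | h
        · have := hRneg _ (hQR h); rwa [neg_neg] at this
        · obtain ⟨hτx, _⟩ : τ (-x) ∈ Q ∧ -(τ (-x)) ∈ Q := (himg _ _).1 h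
          have h1 : -x ∈ R := hmemR' _ (hQR hτx)
          have := hRneg _ h1; rwa [neg_neg] at this
    · intro hx
      by_cases hq : x ∈ Q
      · exact Or.inl (Or.inl hq)
      · have hτx : τ x ∈ Q := hcov x hx hq
        by_cases hn : -(τ x) ∈ Q
        · exact Or.inl (Or.inr ((himg _ x).2 ⟨hτx, hn⟩))
        · have hnR : -(τ x) ∈ R := hRneg _ (hmemR x hx)
          have := hcov _ hnR hn
          rw [map_neg, hτinv] at this
          exact Or.inr (Or.inl this)
  -- Goal (3c)
  have goal3c : {α ∈ Q ∪ τ '' {α ∈ Q | -α ∈ Q} | -α ∉ Q ∪ τ '' {α ∈ Q | -α ∈ Q}}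
      = Q \ {α ∈ Q | -α ∈ Q} := by
    ext x
    constructor
    · rintro ⟨hxP, hnxP⟩
      rcases hxP with hxQ | hxτ
      · refine ⟨hxQ, fun hr => ?_⟩
        exact hnxP (Or.inl hr.2)
      · exfalso
        obtain ⟨hτx, hτxn⟩ : τ x ∈ Q ∧ -(τ x) ∈ Q := (himg _ x).1 hxτ
        apply hnxP
        refine Or.inr ((himg _ _).2 ?_)
        rw [map_neg]
        exact ⟨hτxn, by rwa [neg_neg]⟩
    · rintro ⟨hxQ, hxn⟩
      have hnx : -x ∉ Q := fun h => hxn ⟨hxQ, h⟩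
      refine ⟨Or.inl hxQ, ?_⟩
      rintro (h | h)
      · exact hnx h
      · obtain ⟨hτ, hτn⟩ : τ (-x) ∈ Q ∧ -(τ (-x)) ∈ Q := (himg _ _).1 h
        rw [map_neg, neg_neg] at hτn
        exact hdis x hxQ hτn
  exact ⟨⟨goal1a, goal1b⟩, goal2, goal3a, goal3b, goal3c⟩
end

section
/- Let R be a root system in a finite-dimensional real inner product space V and let Q ∈ 𝔔(R). Then there exists a linear functional f : V → ℝ with f(α) ∈ ℤ for every α ∈ R and f(α) ≡ 1 (mod 4) for every α ∈ Q, if and only if for every integer h both Q*₍₁,₁₎ ∩ Q*_{2h+1} = ∅ and Q*₍₁,₁₎ ∩ Q*_{4h+2} = ∅. -/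
/-- `R` is a root system in the real inner product space `V`. -/
def IsRootSystem {V : Type*} [NormedAddCommGroup V] [InnerProductSpace ℝ V]
    (R : Set V) : Prop :=
  R.Finite ∧ (0 : V) ∉ R ∧ Submodule.span ℝ R = ⊤ ∧
  (∀ α ∈ R, ∀ β ∈ R, ∃ k : ℤ, 2 * (inner ℝ β α : ℝ) / (inner ℝ α α : ℝ) = (k : ℝ)) ∧
  (∀ α ∈ R, ∀ β ∈ R, β - (2 * (inner ℝ β α : ℝ) / (inner ℝ α α : ℝ)) • α ∈ R) ∧
  (∀ α ∈ R, ∀ t : ℝ, t • α ∈ R → t = 1 ∨ t = -1)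

/-- `Q ∈ 𝔔(R)`: (i) `Q ∩ (−Q) = ∅` and `α + β ∉ R` for all `α, β ∈ Q`;
(ii) every element of `R` is a ℤ-linear combination of elements of `Q`. -/
def MemQSet {V : Type*} [AddCommGroup V] (R Q : Set V) : Prop :=
  Q ⊆ R ∧ (∀ α ∈ Q, -α ∉ Q) ∧ (∀ α ∈ Q, ∀ β ∈ Q, α + β ∉ R) ∧
  (∀ γ ∈ R, γ ∈ Submodule.span ℤ Q)

/-- `Q*_h`: roots that are ℤ-linear combinations of elements of `Q` with
coefficient sum `h`. -/
def Qstar {V : Type*} [AddCommGroup V] (R Q : Set V) (h : ℤ) : Set V :=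
  {α ∈ R | ∃ k : V →₀ ℤ, ↑k.support ⊆ Q ∧ (k.sum fun β n => n • β) = α ∧
    (k.sum fun _ n => n) = h}

/-- `Q*₍₁,₁₎`: roots of the form `±(β₁ − β₂)` with `β₁, β₂ ∈ Q`. -/
def Qstar11 {V : Type*} [AddCommGroup V] (R Q : Set V) : Set V :=
  {α ∈ R | ∃ β₁ ∈ Q, ∃ β₂ ∈ Q, α = β₁ - β₂ ∨ α = β₂ - β₁}

/-!
If `f ≡ 1 (mod 4)` on `Q` and `α = β₁ - β₂ = ∑ k_β β`, then `0 ≡ f α ≡ ∑ k_β (mod 4)`. The two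
conditions together say exactly that `Q*₍₁,₁₎ ∩ Q*_s = ∅` whenever `4 ∤ s`, so they are necessary.

Conversely, elements of `Q` have pairwise non-negative inner products, since a negative one
would make their sum a root. A relation `∑ k_β β = 0` with `4 ∤ ∑ k_β` is nontrivial, so two
distinct elements of `Q` are not orthogonal and their difference `δ` is a root; but then
`δ = δ + ∑ k_β β` lies in `Q*₍₁,₁₎ ∩ Q*_{∑ k_β}`. Hence `∑ k_β β ↦ ∑ k_β mod 4` is a well defined
homomorphism on the lattice `ℤQ`. It lifts to `ℤ` because `ℤQ` is free, and the lift extends to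
a real functional because the Cartan integers `2⟪·, α⟫/⟪α, α⟫` embed `ℤQ` into `ℤ^R` and `ℝ` is
an injective `ℤ`-module.
-/

open RealInnerProductSpace

lemma forall_odd_and_two_mod_four_iff (P : ℤ → Prop) :
    (∀ h : ℤ, P (2 * h + 1) ∧ P (4 * h + 2)) ↔ ∀ s : ℤ, ¬ 4 ∣ s → P s := by
  refine ⟨fun H s hs => ?_, fun H h => ⟨H _ (by omega), H _ (by omega)⟩⟩
  rcases Int.even_or_odd' s with ⟨h, rfl | rfl⟩
  · obtain ⟨h', rfl⟩ : ∃ h', h = 2 * h' + 1 := ⟨h / 2, by omega⟩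
    convert (H h').2 using 1
    ring
  · exact (H h).1

section Qstar

variable {V : Type*} [AddCommGroup V] {R Q : Set V}

lemma mem_Qstar_of_sum_smul_eq [Fintype Q] {α : V} (hα : α ∈ R) (k : Q → ℤ)
    (hk : ∑ β, k β • (β : V) = α) : α ∈ Qstar R Q (∑ β, k β) := by
  classical
  refine ⟨hα, Finsupp.mapDomain Subtype.val (Finsupp.equivFunOnFinite.symm k), ?_, ?_, ?_⟩
  · intro x hx
    obtain ⟨β, -, rfl⟩ := Finset.mem_image.1 (Finsupp.mapDomain_support hx)
    exact β.2
  · rw [Finsupp.sum_mapDomain_index (fun b => zero_smul ℤ b) fun b _ _ => add_smul _ _ b,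
      Finsupp.sum_fintype _ _ (by simp)]
    exact hk
  · rw [Finsupp.sum_mapDomain_index (fun _ => rfl) fun _ _ _ => rfl,
      Finsupp.sum_fintype _ _ (by simp)]
    rfl

variable [Module ℝ V] (f : V →ₗ[ℝ] ℝ)

lemma exists_eq_four_mul_add_of_mem_Qstar
    (hf : ∀ α ∈ Q, ∃ m : ℤ, f α = ((4 * m + 1 : ℤ) : ℝ)) {s : ℤ} {α : V}
    (hα : α ∈ Qstar R Q s) : ∃ N : ℤ, f α = ((4 * N + s : ℤ) : ℝ) := by
  obtain ⟨-, k, hkQ, rfl, rfl⟩ := hα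
  choose! m hm using hf
  refine ⟨k.sum fun β n => n * m β, ?_⟩
  simp only [Finsupp.sum, map_sum, map_zsmul, zsmul_eq_mul]
  push_cast
  rw [Finset.mul_sum, ← Finset.sum_add_distrib]
  refine Finset.sum_congr rfl fun β hβ => ?_
  rw [hm β (hkQ hβ)]
  push_cast
  ring

lemma exists_eq_four_mul_of_mem_Qstar11
    (hf : ∀ α ∈ Q, ∃ m : ℤ, f α = ((4 * m + 1 : ℤ) : ℝ)) {α : V}
    (hα : α ∈ Qstar11 R Q) : ∃ M : ℤ, f α = ((4 * M : ℤ) : ℝ) := by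
  obtain ⟨-, β₁, hβ₁, β₂, hβ₂, hα⟩ := hα
  obtain ⟨m₁, hm₁⟩ := hf β₁ hβ₁
  obtain ⟨m₂, hm₂⟩ := hf β₂ hβ₂
  rcases hα with rfl | rfl
  · exact ⟨m₁ - m₂, by rw [map_sub, hm₁, hm₂]; push_cast; ring⟩
  · exact ⟨m₂ - m₁, by rw [map_sub, hm₁, hm₂]; push_cast; ring⟩

lemma Qstar11_inter_Qstar_eq_empty
    (hf : ∀ α ∈ Q, ∃ m : ℤ, f α = ((4 * m + 1 : ℤ) : ℝ)) {s : ℤ} (hs : ¬ 4 ∣ s) :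
    Qstar11 R Q ∩ Qstar R Q s = ∅ := by
  refine Set.eq_empty_iff_forall_notMem.2 fun α ⟨h₁₁, hₛ⟩ => hs ?_
  obtain ⟨M, hM⟩ := exists_eq_four_mul_of_mem_Qstar11 f hf h₁₁
  obtain ⟨N, hN⟩ := exists_eq_four_mul_add_of_mem_Qstar f hf hₛ
  have : 4 * M = 4 * N + s := by exact_mod_cast hM.symm.trans hN
  omega

end Qstar

namespace IsRootSystem

variable {V : Type*} [NormedAddCommGroup V] [InnerProductSpace ℝ V] {R : Set V} {α β : V}

lemma ne_zero (hR : IsRootSystem R) (hα : α ∈ R) : α ≠ 0 := fun h => hR.2.1 (h ▸ hα)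

lemma neg_mem (hR : IsRootSystem R) (hα : α ∈ R) : -α ∈ R := by
  have := hR.2.2.2.2.1 α hα α hα
  rwa [mul_div_assoc, div_self (inner_self_ne_zero.2 (hR.ne_zero hα)), mul_one, two_smul,
    sub_add_cancel_left] at this

lemma abs_inner_lt (hR : IsRootSystem R) (hα : α ∈ R) (hβ : β ∈ R) (hne : β ≠ α)
    (hne' : β ≠ -α) : |⟪α, β⟫| < ‖α‖ * ‖β‖ := by
  refine (abs_real_inner_le_norm α β).lt_of_ne fun h => ?_
  rw [← Real.norm_eq_abs] at h
  obtain ⟨r, -, rfl⟩ := (norm_inner_eq_norm_iff (hR.ne_zero hα) (hR.ne_zero hβ)).1 h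
  rcases hR.2.2.2.2.2 α hα r hβ with rfl | rfl
  · exact hne (one_smul ℝ α)
  · exact hne' (neg_one_smul ℝ α)

lemma sub_mem_or_sub_mem_of_inner_pos (hR : IsRootSystem R) (hα : α ∈ R) (hβ : β ∈ R)
    (hne : β ≠ α) (hne' : β ≠ -α) (hpos : 0 < ⟪α, β⟫) : α - β ∈ R ∨ β - α ∈ R := by
  obtain ⟨p, hp⟩ := hR.2.2.2.1 β hβ α hα
  obtain ⟨q, hq⟩ := hR.2.2.2.1 α hα β hβ
  rw [real_inner_self_eq_norm_sq] at hp hq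
  rw [real_inner_comm] at hq
  have hα0 := norm_pos_iff.2 (hR.ne_zero hα)
  have hβ0 := norm_pos_iff.2 (hR.ne_zero hβ)
  have hp0 : 0 < p := by exact_mod_cast (hp ▸ by positivity : (0 : ℝ) < p)
  have hq0 : 0 < q := by exact_mod_cast (hq ▸ by positivity : (0 : ℝ) < q)
  have hpq : p * q < 4 := by
    have hsq : ⟪α, β⟫ ^ 2 < (‖α‖ * ‖β‖) ^ 2 := sq_lt_sq.2 <| by
      rw [abs_of_pos (mul_pos hα0 hβ0)]
      exact hR.abs_inner_lt hα hβ hne hne'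
    have : (p * q : ℝ) < 4 := by
      rw [← hp, ← hq, div_mul_div_comm, div_lt_iff₀ (by positivity)]
      nlinarith
    exact_mod_cast this
  obtain rfl | rfl : p = 1 ∨ q = 1 := by
    by_contra! h
    nlinarith [h.1.lt_of_le' hp0, h.2.lt_of_le' hq0]
  · left
    simpa [hp] using hR.2.2.2.2.1 β hβ α hα
  · right
    simpa [hq, real_inner_comm] using hR.2.2.2.2.1 α hα β hβ

end IsRootSystem

section CartanCoords

variable {V : Type*} [NormedAddCommGroup V] [InnerProductSpace ℝ V]

noncomputable def cartanCoords (R : Set V) : V →ₗ[ℝ] R → ℝ :=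
  LinearMap.pi fun α => (2 / ⟪(α : V), α⟫) • innerₗ V (α : V)

lemma cartanCoords_apply (R : Set V) (v : V) (α : R) :
    cartanCoords R v α = 2 * ⟪v, α⟫ / ⟪(α : V), α⟫ := by
  rw [cartanCoords, LinearMap.pi_apply, LinearMap.smul_apply, innerₗ_apply_apply, smul_eq_mul,
    div_mul_eq_mul_div, real_inner_comm v]

variable {R : Set V}

lemma IsRootSystem.cartanCoords_injective (hR : IsRootSystem R) :
    Function.Injective (cartanCoords R) := by
  refine (injective_iff_map_eq_zero _).2 fun v hv => (inner_self_eq_zero (𝕜 := ℝ)).1 ?_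
  have hspan : Submodule.span ℝ R ≤ LinearMap.ker (innerₗ V v) := by
    refine Submodule.span_le.2 fun α hα => ?_
    have := congr_fun hv ⟨α, hα⟩
    rw [cartanCoords_apply, Pi.zero_apply, div_eq_zero_iff] at this
    simpa [inner_self_eq_zero, hR.ne_zero hα] using this
  exact hspan (hR.2.2.1 ▸ Submodule.mem_top)

lemma IsRootSystem.exists_cartanCoords_eq_intCast (hR : IsRootSystem R) {x : V}
    (hx : x ∈ Submodule.span ℤ R) (α : R) : ∃ z : ℤ, cartanCoords R x α = z := by
  induction hx using Submodule.span_induction with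
  | mem β hβ => simpa [cartanCoords_apply] using hR.2.2.2.1 α α.2 β hβ
  | zero => exact ⟨0, by simp⟩
  | add x y _ _ hx hy =>
    obtain ⟨a, ha⟩ := hx
    obtain ⟨b, hb⟩ := hy
    exact ⟨a + b, by simp [ha, hb]⟩
  | smul n x _ hx =>
    obtain ⟨a, ha⟩ := hx
    exact ⟨n * a, by simp [ha]⟩

end CartanCoords

lemma LinearMap.exists_intLift_of_ker_le {M N : Type*} [AddCommGroup M] [AddCommGroup N]
    (T : M →ₗ[ℤ] N) [Module.Projective ℤ (LinearMap.range T)] {n : ℕ} (σ : M →ₗ[ℤ] ZMod n)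
    (h : LinearMap.ker T ≤ LinearMap.ker σ) :
    ∃ g : LinearMap.range T →ₗ[ℤ] ℤ, ∀ m, (g (T.rangeRestrict m) : ZMod n) = σ m := by
  obtain ⟨g, hg⟩ := Module.projective_lifting_property (Int.castAddHom (ZMod n)).toIntLinearMap
    ((LinearMap.ker T).liftQ σ h ∘ₗ T.quotKerEquivRange.symm.toLinearMap)
    ZMod.intCast_surjective
  refine ⟨g, fun m => (LinearMap.congr_fun hg (T.rangeRestrict m)).trans ?_⟩
  simp [LinearMap.rangeRestrict, LinearMap.codRestrict]

lemma exists_linearMap_extend_of_intCoords {V ι : Type*} [AddCommGroup V] [Module ℝ V]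
    [Fintype ι] (Φ : V →ₗ[ℝ] ι → ℝ) (L : Submodule ℤ V)
    (hint : ∀ x ∈ L, ∀ i, ∃ z : ℤ, Φ x i = z) (hinj : ∀ x ∈ L, Φ x = 0 → x = 0)
    (g : L →ₗ[ℤ] ℤ) : ∃ f : V →ₗ[ℝ] ℝ, ∀ x : L, f x = g x := by
  classical
  -- `ψ` is only `ℤ`-linear, but on the integral vectors `Φ x` it agrees with the `ℝ`-linear map
  -- determined by its values on the standard basis.
  obtain ⟨ψ, hψ⟩ := (Module.Baer.of_divisible ℝ).extension_property
    (Φ.restrictScalars ℤ ∘ₗ L.subtype)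
    ((injective_iff_map_eq_zero _).2 fun x hx => Subtype.ext (hinj x x.2 hx))
    ((Int.castAddHom ℝ).toIntLinearMap ∘ₗ g)
  refine ⟨Fintype.linearCombination ℝ (fun i => ψ (Pi.single i 1)) ∘ₗ Φ, fun x => ?_⟩
  choose z hz using hint x x.2
  have hΦx : Φ x = ∑ i, z i • Pi.single i 1 := by
    ext i
    simp [hz, Finset.sum_apply, Pi.single_apply]
  have hψx := LinearMap.congr_fun hψ x
  simp only [LinearMap.comp_apply, LinearMap.restrictScalars_apply, Submodule.subtype_apply,
    AddMonoidHom.coe_toIntLinearMap, Int.coe_castAddHom] at hψx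
  calc _ = ∑ i, (z i : ℝ) * ψ (Pi.single i 1) := by simp [Fintype.linearCombination_apply, hz]
    _ = ψ (∑ i, z i • Pi.single i 1) := by
      simp only [map_sum, map_zsmul, ← zsmul_eq_mul]
    _ = g x := by rw [← hΦx, hψx]

namespace MemQSet

variable {V : Type*} [NormedAddCommGroup V] [InnerProductSpace ℝ V] {R Q : Set V}

lemma inner_nonneg (hR : IsRootSystem R) (hQ : MemQSet R Q) {β γ : V} (hβ : β ∈ Q)
    (hγ : γ ∈ Q) : 0 ≤ ⟪β, γ⟫ := by
  rcases eq_or_ne β γ with rfl | hne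
  · exact real_inner_self_nonneg
  by_contra! hneg
  have hβγ : -γ ≠ β := fun h => hQ.2.1 γ hγ (h ▸ hβ)
  rcases hR.sub_mem_or_sub_mem_of_inner_pos (hQ.1 hβ) (hR.neg_mem (hQ.1 hγ)) hβγ
    (neg_injective.ne hne.symm) (by rw [inner_neg_right]; linarith) with h | h
  · exact hQ.2.2.1 β hβ γ hγ (by rwa [sub_neg_eq_add] at h)
  · exact hQ.2.2.1 β hβ γ hγ (by simpa [add_comm] using hR.neg_mem h)

lemma four_dvd_sum_of_sum_smul_eq_zero [Fintype Q] (hR : IsRootSystem R) (hQ : MemQSet R Q)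
    (hQstar : ∀ s : ℤ, ¬ 4 ∣ s → Qstar11 R Q ∩ Qstar R Q s = ∅) (k : Q → ℤ)
    (hk : ∑ β, k β • (β : V) = 0) : 4 ∣ ∑ β, k β := by
  classical
  by_contra hs
  have hdep : ¬ LinearIndependent ℝ (Subtype.val : Q → V) := fun hli => hs <| by
    simp [Fintype.linearIndependent_iff.1 (hli.restrict_scalars' ℤ) k hk]
  obtain ⟨b, b', hne, hbb'⟩ : ∃ b b' : Q, b ≠ b' ∧ ⟪(b : V), b'⟫ ≠ 0 := by
    by_contra! h
    exact hdep (linearIndependent_of_ne_zero_of_inner_eq_zero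
      (fun b => hR.ne_zero (hQ.1 b.2)) h)
  obtain ⟨b₁, b₂, hb₁₂⟩ : ∃ b₁ b₂ : Q, (b₁ - b₂ : V) ∈ R := by
    have hpos := (hQ.inner_nonneg hR b.2 b'.2).lt_of_ne hbb'.symm
    rcases hR.sub_mem_or_sub_mem_of_inner_pos (hQ.1 b.2) (hQ.1 b'.2)
      (Subtype.coe_injective.ne hne.symm) (fun h => hQ.2.1 _ b.2 (h ▸ b'.2)) hpos with h | h
    exacts [⟨b, b', h⟩, ⟨b', b, h⟩]
  have hmem := mem_Qstar_of_sum_smul_eq hb₁₂ (k + Pi.single b₁ 1 - Pi.single b₂ 1) <| by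
    simp [sub_smul, add_smul, Finset.sum_add_distrib, Finset.sum_sub_distrib, hk]
  simp only [Pi.add_apply, Pi.sub_apply, Finset.sum_sub_distrib, Finset.sum_add_distrib,
    Finset.sum_pi_single', Finset.mem_univ, if_true, add_sub_cancel_right] at hmem
  exact (Set.eq_empty_iff_forall_notMem.1 (hQstar _ hs)) _
    ⟨⟨hb₁₂, b₁, b₁.2, b₂, b₂.2, Or.inl rfl⟩, hmem⟩

lemma exists_linearMap_of_four_dvd [Fintype Q] (hR : IsRootSystem R) (hQ : MemQSet R Q)
    (hrel : ∀ k : Q → ℤ, ∑ β, k β • (β : V) = 0 → 4 ∣ ∑ β, k β) :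
    ∃ f : V →ₗ[ℝ] ℝ, (∀ α ∈ R, ∃ m : ℤ, f α = (m : ℝ)) ∧
      (∀ α ∈ Q, ∃ m : ℤ, f α = ((4 * m + 1 : ℤ) : ℝ)) := by
  classical
  have := IsAddTorsionFree.of_isTorsionFree ℝ V
  have := hR.1.fintype
  set T := Fintype.linearCombination ℤ (Subtype.val : Q → V)
  have hT : LinearMap.range T = Submodule.span ℤ Q := by
    rw [Fintype.range_linearCombination, Subtype.range_coe]
  obtain ⟨g, hg⟩ := T.exists_intLift_of_ker_le
    (Fintype.linearCombination ℤ fun _ => (1 : ZMod 4)) fun k hk => by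
      rw [LinearMap.mem_ker, Fintype.linearCombination_apply] at hk ⊢
      simp only [zsmul_eq_mul, mul_one, ← Int.cast_sum]
      exact (ZMod.intCast_zmod_eq_zero_iff_dvd _ 4).2 (hrel k hk)
  obtain ⟨f, hf⟩ := exists_linearMap_extend_of_intCoords (cartanCoords R) (LinearMap.range T)
    (fun x hx => hR.exists_cartanCoords_eq_intCast (Submodule.span_mono hQ.1 (hT ▸ hx)))
    (fun x _ hx => hR.cartanCoords_injective (hx.trans (map_zero _).symm)) g
  refine ⟨f, fun α hα => ⟨_, hf ⟨α, hT ▸ hQ.2.2.2 α hα⟩⟩, fun β hβ => ?_⟩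
  set x := T.rangeRestrict (Pi.single ⟨β, hβ⟩ 1)
  have hx : (x : V) = β := by simp [x, T]
  have hgx : ((1 : ℤ) : ZMod 4) = g x := by simpa using (hg (Pi.single ⟨β, hβ⟩ 1)).symm
  obtain ⟨m, hm⟩ := (ZMod.intCast_eq_intCast_iff_dvd_sub _ _ 4).1 hgx
  exact ⟨m, by rw [← hx, hf x]; congr 1; omega⟩

end MemQSet

theorem stmt_11_general {V : Type*} [NormedAddCommGroup V] [InnerProductSpace ℝ V]
    (R : Set V) (hR : IsRootSystem R) (Q : Set V) (hQ : MemQSet R Q) :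
    (∃ f : V →ₗ[ℝ] ℝ, (∀ α ∈ R, ∃ m : ℤ, f α = (m : ℝ)) ∧
       (∀ α ∈ Q, ∃ m : ℤ, f α = ((4 * m + 1 : ℤ) : ℝ))) ↔
    (∀ h : ℤ, Qstar11 R Q ∩ Qstar R Q (2 * h + 1) = ∅ ∧
       Qstar11 R Q ∩ Qstar R Q (4 * h + 2) = ∅) := by
  have := (hR.1.subset hQ.1).fintype
  rw [forall_odd_and_two_mod_four_iff fun s => Qstar11 R Q ∩ Qstar R Q s = ∅]
  refine ⟨fun ⟨f, _, hf⟩ _ hs => Qstar11_inter_Qstar_eq_empty f hf hs, fun H => ?_⟩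
  exact hQ.exists_linearMap_of_four_dvd hR (hQ.four_dvd_sum_of_sum_smul_eq_zero hR H)

/-- Criterion for the weak-J-property of the CR algebra of the complete flag
determined by `Q`: there is a linear functional integral on `R` and `≡ 1 mod 4`
on `Q` iff `Q*₍₁,₁₎ ∩ Q*_{2h+1} = ∅` and `Q*₍₁,₁₎ ∩ Q*_{4h+2} = ∅` for all `h`. -/
theorem stmt_11 {V : Type*} [NormedAddCommGroup V] [InnerProductSpace ℝ V]
    [FiniteDimensional ℝ V]
    (R : Set V) (hR : IsRootSystem R) (Q : Set V) (hQ : MemQSet R Q) :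
    (∃ f : V →ₗ[ℝ] ℝ, (∀ α ∈ R, ∃ m : ℤ, f α = (m : ℝ)) ∧
       (∀ α ∈ Q, ∃ m : ℤ, f α = ((4 * m + 1 : ℤ) : ℝ))) ↔
    (∀ h : ℤ, Qstar11 R Q ∩ Qstar R Q (2 * h + 1) = ∅ ∧
       Qstar11 R Q ∩ Qstar R Q (4 * h + 2) = ∅) :=
  stmt_11_general R hR Q hQ
end

section
/- Let n ≥ 2, let e₁,…,e_n be the standard basis of ℝⁿ, and let R = {e_i − e_j : 1 ≤ i, j ≤ n, i ≠ j} (the root system of type A_{n−1}). If Q is a maximal element, with respect to inclusion, of the family 𝔔(R) of subsets of R satisfying conditions (i) and (ii), then there exists a subset I of {1,…,n} with ∅ ≠ I ≠ {1,…,n} such that Q = {e_i − e_j : i ∈ I, j ∉ I}. -/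
/-- The standard basis vector `e i` of `ℝⁿ`. -/
def stdVec {n : ℕ} (i : Fin n) : Fin n → ℝ := Pi.single i 1

/-- `s` is a sign, `s = ±1`. -/
def Sgn (s : ℝ) : Prop := s = 1 ∨ s = -1

lemma stdVec_apply {n : ℕ} (i j : Fin n) : stdVec i j = if j = i then 1 else 0 :=
  Pi.single_apply i 1 j

lemma stdVec_sub_ne_zero {n : ℕ} {i j : Fin n} (h : i ≠ j) :
    stdVec i - stdVec j ≠ 0 := by
  intro h'
  have := congrFun h' i
  simp [stdVec_apply, h] at this

lemma stdVec_sub_inj {n : ℕ} {i j a b : Fin n} (hij : i ≠ j) (hab : a ≠ b)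
    (h : stdVec i - stdVec j = stdVec a - stdVec b) : i = a ∧ j = b := by
  have h1 := congrFun h i
  have h2 := congrFun h j
  simp [stdVec_apply, hij, hij.symm] at h1 h2
  constructor
  · by_cases ha : i = a
    · exact ha
    · exfalso
      by_cases hb : i = b <;> simp [ha, hb, hab, Ne.symm hab] at h1 <;> norm_num at h1
  · by_cases hb : j = b
    · exact hb
    · exfalso
      by_cases ha : j = a <;> simp [ha, hb, hab, Ne.symm hab] at h2 <;> norm_num at h2

lemma stdVec_sum_ne {n : ℕ} {i j k l a b : Fin n} (hij : i ≠ j) (hil : i ≠ l)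
    (hkj : k ≠ j) (hkl : k ≠ l) (hab : a ≠ b) :
    (stdVec i - stdVec j) + (stdVec k - stdVec l) ≠ stdVec a - stdVec b := by
  intro h
  by_cases hik : i = k
  · subst hik
    have h1 := congrFun h i
    simp [stdVec_apply, hij, hil] at h1 <;> norm_num at h1
    by_cases ha : i = a <;> by_cases hb : i = b <;>
      simp [ha, hb, hab, Ne.symm hab] at h1 <;> norm_num at h1 <;> norm_num at h1
  · have hki : k ≠ i := fun e => hik e.symm
    have h1 := congrFun h i
    have h2 := congrFun h k
    simp [stdVec_apply, hij, hil, hkj, hkl, hik, hki] at h1 h2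
    have hia : i = a := by
      by_cases ha : i = a
      · exact ha
      · exfalso; by_cases hb : i = b <;> simp [ha, hb, hab, Ne.symm hab] at h1 <;> norm_num at h1
    have hka : k = a := by
      by_cases ha : k = a
      · exact ha
      · exfalso; by_cases hb : k = b <;> simp [ha, hb, hab, Ne.symm hab] at h2 <;> norm_num at h2
    exact hik (hia.trans hka.symm)


/-- Classification of the maximal elements of `𝔔(R)` for `R` of type `A_{n−1}`:
each is of the form `{e_i − e_j : i ∈ I, j ∉ I}` for some nontrivial subset `I`. -/
theorem stmt_13 (n : ℕ) (hn : 2 ≤ n)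
    (R : Set (Fin n → ℝ))
    (hR : R = {v | ∃ i j : Fin n, i ≠ j ∧ v = stdVec i - stdVec j})
    (Q : Set (Fin n → ℝ)) (hQ : MemQSet R Q)
    (hmax : ∀ Q' : Set (Fin n → ℝ), MemQSet R Q' → Q ⊆ Q' → Q' = Q) :
    ∃ I : Set (Fin n), I.Nonempty ∧ I ≠ Set.univ ∧
      Q = {v | ∃ i ∈ I, ∃ j ∉ I, v = stdVec i - stdVec j} := by
  subst hR
  obtain ⟨hQR, hneg, hsum, hspan⟩ := hQ
  -- I : sources
  set I : Set (Fin n) := {i | ∃ j, stdVec i - stdVec j ∈ Q} with hI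
  -- key: if e_i - e_j ∈ Q with i ≠ j, then j ∉ I
  have hkey : ∀ i j : Fin n, i ≠ j → stdVec i - stdVec j ∈ Q → j ∉ I := by
    intro i j hij hmem hjI
    obtain ⟨k, hk⟩ := hjI
    have hjk : j ≠ k := by
      intro e
      subst e
      obtain ⟨a, b, hab, hab'⟩ := hQR hk
      simp at hab'
      exact stdVec_sub_ne_zero hab hab'.symm
    by_cases hik : i = k
    · subst hik
      exact hneg _ hmem (by rw [neg_sub]; exact hk)
    · apply hsum _ hmem _ hk
      refine ⟨i, k, hik, ?_⟩
      abel
  -- Q nonempty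
  have hne : Q.Nonempty := by
    rcases Q.eq_empty_or_nonempty with he | h
    · exfalso
      have h01 : (⟨0, by omega⟩ : Fin n) ≠ ⟨1, by omega⟩ := by
        intro e; simpa using congrArg Fin.val e
      have := hspan _ ⟨_, _, h01, rfl⟩
      rw [he, Submodule.span_empty, Submodule.mem_bot] at this
      exact stdVec_sub_ne_zero h01 this
    · exact h
  -- Q ⊆ Q'
  set Q' : Set (Fin n → ℝ) := {v | ∃ i ∈ I, ∃ j ∉ I, v = stdVec i - stdVec j} with hQ'
  have hsub : Q ⊆ Q' := by
    intro v hv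
    obtain ⟨i, j, hij, rfl⟩ := hQR hv
    exact ⟨i, ⟨j, hv⟩, j, hkey i j hij hv, rfl⟩
  -- Q' ∈ 𝔔(R)
  have hIne : ∀ {i j : Fin n}, i ∈ I → j ∉ I → i ≠ j := by
    intro i j hi hj e; exact hj (e ▸ hi)
  have hQ'mem : MemQSet {v | ∃ i j : Fin n, i ≠ j ∧ v = stdVec i - stdVec j} Q' := by
    refine ⟨?_, ?_, ?_, ?_⟩
    · rintro v ⟨i, hi, j, hj, rfl⟩
      exact ⟨i, j, hIne hi hj, rfl⟩
    · rintro v ⟨i, hi, j, hj, rfl⟩ ⟨a, ha, b, hb, hab⟩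
      rw [neg_sub] at hab
      obtain ⟨h1, h2⟩ := stdVec_sub_inj (hIne hi hj).symm (hIne ha hb) hab
      exact hj (h1 ▸ ha)
    · rintro α ⟨i, hi, j, hj, rfl⟩ β ⟨k, hk, l, hl, rfl⟩ ⟨a, b, hab, habe⟩
      exact stdVec_sum_ne (hIne hi hj) (hIne hi hl) (hIne hk hj) (hIne hk hl) hab habe
    · intro γ hγ
      exact Submodule.span_mono hsub (hspan γ hγ)
  have hQeq := hmax Q' hQ'mem hsub
  obtain ⟨v, hv⟩ := hne
  obtain ⟨i, j, hij, rfl⟩ := hQR hv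
  refine ⟨I, ⟨i, j, hv⟩, ?_, hQeq.symm⟩
  intro he
  exact (hkey i j hij hv) (he ▸ Set.mem_univ j)
end

section
/- Let n ≥ 2, let e₁,…,e_n be the standard basis of ℝⁿ, and let R = {±2e_i : 1 ≤ i ≤ n} ∪ {±e_i ± e_j : 1 ≤ i < j ≤ n} (the root system of type C_n). If Q is a maximal element, with respect to inclusion, of the family 𝔔(R) of subsets of R satisfying conditions (i) and (ii), then there exist signs ε₁,…,ε_n ∈ {−1,+1} such that Q = {2ε_i e_i : 1 ≤ i ≤ n} ∪ {ε_i e_i + ε_j e_j : 1 ≤ i < j ≤ n}. -/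
namespace C14aux

@[simp] lemma stdVec_apply {n : ℕ} (i k : Fin n) :
    stdVec i k = if k = i then 1 else 0 := by
  simp [stdVec, Pi.single_apply]

/-- The root system of type `C_n`. -/
def Rset (n : ℕ) : Set (Fin n → ℝ) :=
  {v | ∃ i : Fin n, v = (2 : ℝ) • stdVec i ∨ v = -((2 : ℝ) • stdVec i)} ∪
    {v | ∃ i j : Fin n, i < j ∧ ∃ s t : ℝ, Sgn s ∧ Sgn t ∧
      v = s • stdVec i + t • stdVec j}

lemma sgn_one : Sgn (1 : ℝ) := Or.inl rfl
lemma sgn_negone : Sgn (-1 : ℝ) := Or.inr rfl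

lemma sgn_neg {s : ℝ} (h : Sgn s) : Sgn (-s) := by
  rcases h with rfl | rfl
  · exact Or.inr rfl
  · exact Or.inl (by norm_num)

lemma sgn_cases {a b : ℝ} (ha : Sgn a) (hb : Sgn b) : a = b ∨ a = -b := by
  rcases ha with rfl | rfl <;> rcases hb with rfl | rfl <;> norm_num

lemma long_mem {n : ℕ} (i : Fin n) : (2 : ℝ) • stdVec i ∈ Rset n :=
  Or.inl ⟨i, Or.inl rfl⟩

lemma long_mem' {n : ℕ} (i : Fin n) : -((2 : ℝ) • stdVec i) ∈ Rset n :=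
  Or.inl ⟨i, Or.inr rfl⟩

lemma short_mem {n : ℕ} {i j : Fin n} (hij : i ≠ j) {s t : ℝ}
    (hs : Sgn s) (ht : Sgn t) : s • stdVec i + t • stdVec j ∈ Rset n := by
  rcases lt_or_gt_of_ne hij with h | h
  · exact Or.inr ⟨i, j, h, s, t, hs, ht, rfl⟩
  · exact Or.inr ⟨j, i, h, t, s, ht, hs, by rw [add_comm]⟩

lemma neg_mem {n : ℕ} {α : Fin n → ℝ} (hα : α ∈ Rset n) : -α ∈ Rset n := by
  rcases hα with ⟨a, rfl | rfl⟩ | ⟨a, b, hab, s, t, hs, ht, rfl⟩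
  · exact long_mem' a
  · rw [neg_neg]; exact long_mem a
  · have : -(s • stdVec a + t • stdVec b)
        = (-s) • stdVec a + (-t) • stdVec b := by module
    rw [this]
    exact Or.inr ⟨a, b, hab, -s, -t, sgn_neg hs, sgn_neg ht, rfl⟩

lemma pos_struct {n : ℕ} {α : Fin n → ℝ} (hα : α ∈ Rset n) {i : Fin n}
    (h : 0 < α i) :
    α = (2 : ℝ) • stdVec i ∨
      ∃ k, k ≠ i ∧ ∃ t, Sgn t ∧ α = stdVec i + t • stdVec k := by
  rcases hα with ⟨a, rfl | rfl⟩ | ⟨a, b, hab, s, t, hs, ht, rfl⟩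
  · left
    have hia : i = a := by
      by_contra hne
      simp [hne] at h
    subst hia; rfl
  · exfalso
    rcases eq_or_ne i a with rfl | hne
    · simp at h; linarith
    · simp [hne] at h
  · right
    have hab' : a ≠ b := ne_of_lt hab
    rcases eq_or_ne i a with rfl | hia
    · have hs1 : s = 1 := by
        simp [hab'] at h
        rcases hs with rfl | rfl
        · rfl
        · linarith
      exact ⟨b, hab.ne', t, ht, by rw [hs1, one_smul]⟩
    · rcases eq_or_ne i b with rfl | hib
      · have ht1 : t = 1 := by
          simp [hia] at h
          rcases ht with rfl | rfl
          · rfl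
          · linarith
        exact ⟨a, Ne.symm hia, s, hs, by rw [ht1, one_smul, add_comm]⟩
      · exfalso
        simp [hia, hib] at h

lemma neg_struct {n : ℕ} {α : Fin n → ℝ} (hα : α ∈ Rset n) {i : Fin n}
    (h : α i < 0) :
    α = -((2 : ℝ) • stdVec i) ∨
      ∃ k, k ≠ i ∧ ∃ t, Sgn t ∧ α = -stdVec i + t • stdVec k := by
  have h' : 0 < (-α) i := by simpa using neg_pos.mpr h
  rcases pos_struct (neg_mem hα) h' with h1 | ⟨k, hk, t, ht, h2⟩
  · left
    rw [← neg_neg α, h1]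
  · right
    refine ⟨k, hk, -t, sgn_neg ht, ?_⟩
    have := congrArg Neg.neg h2
    rw [neg_neg] at this
    rw [this]; module

lemma consistent {n : ℕ} {Q : Set (Fin n → ℝ)} (hQ : MemQSet (Rset n) Q)
    {α β : Fin n → ℝ} (hα : α ∈ Q) (hβ : β ∈ Q) {i : Fin n}
    (ha : 0 < α i) (hb : β i < 0) : False := by
  obtain ⟨hsub, hneg, hsum, -⟩ := hQ
  rcases pos_struct (hsub hα) ha with rfl | ⟨k, hk, t, ht, rfl⟩ <;>
    rcases neg_struct (hsub hβ) hb with rfl | ⟨m, hm, u, hu, rfl⟩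
  · exact hneg _ hα (by simpa using hβ)
  · refine hsum _ hα _ hβ ?_
    have : (2 : ℝ) • stdVec i + (-stdVec i + u • stdVec m)
        = (1 : ℝ) • stdVec i + u • stdVec m := by module
    rw [this]
    exact short_mem (Ne.symm hm) sgn_one hu
  · refine hsum _ hα _ hβ ?_
    have : (stdVec i + t • stdVec k) + -((2 : ℝ) • stdVec i)
        = (-1 : ℝ) • stdVec i + t • stdVec k := by module
    rw [this]
    exact short_mem (Ne.symm hk) sgn_negone ht
  · rcases eq_or_ne k m with rfl | hkm
    · rcases sgn_cases ht hu with rfl | h'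
      · refine hsum _ hα _ hβ ?_
        rcases hu with rfl | rfl
        · have : (stdVec i + (1 : ℝ) • stdVec k) + (-stdVec i + (1 : ℝ) • stdVec k)
              = (2 : ℝ) • stdVec k := by module
          rw [this]; exact long_mem k
        · have : (stdVec i + (-1 : ℝ) • stdVec k) + (-stdVec i + (-1 : ℝ) • stdVec k)
              = -((2 : ℝ) • stdVec k) := by module
          rw [this]; exact long_mem' k
      · refine hneg _ hα ?_
        have : -(stdVec i + t • stdVec k) = -stdVec i + u • stdVec k := by
          rw [h']; module
        rw [← this] at hβ
        exact hβ
    · refine hsum _ hα _ hβ ?_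
      have : (stdVec i + t • stdVec k) + (-stdVec i + u • stdVec m)
          = t • stdVec k + u • stdVec m := by module
      rw [this]
      exact short_mem hkm ht hu

lemma exists_support {n : ℕ} {Q : Set (Fin n → ℝ)} (hQ : MemQSet (Rset n) Q)
    (i : Fin n) : ∃ α ∈ Q, α i ≠ 0 := by
  by_contra hc
  push_neg at hc
  have h2 : (2 : ℝ) • stdVec i ∈ Submodule.span ℤ Q := hQ.2.2.2 _ (long_mem i)
  have hker : Submodule.span ℤ Q ≤
      LinearMap.ker (LinearMap.proj i : (Fin n → ℝ) →ₗ[ℤ] ℝ) := by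
    rw [Submodule.span_le]
    intro α hα
    simpa using hc α hα
  have := hker h2
  simp [LinearMap.mem_ker] at this

end C14aux

open C14aux in
/-- Classification of the maximal elements of `𝔔(R)` for `R` of type `C_n`:
each is of the form `{2ε_i e_i} ∪ {ε_i e_i + ε_j e_j : i < j}` for signs `ε`. -/
theorem stmt_14 (n : ℕ) (hn : 2 ≤ n)
    (R : Set (Fin n → ℝ))
    (hR : R = {v | ∃ i : Fin n, v = (2 : ℝ) • stdVec i ∨ v = -((2 : ℝ) • stdVec i)} ∪
      {v | ∃ i j : Fin n, i < j ∧ ∃ s t : ℝ, Sgn s ∧ Sgn t ∧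
        v = s • stdVec i + t • stdVec j})
    (Q : Set (Fin n → ℝ)) (hQ : MemQSet R Q)
    (hmax : ∀ Q' : Set (Fin n → ℝ), MemQSet R Q' → Q ⊆ Q' → Q' = Q) :
    ∃ ε : Fin n → ℝ, (∀ i, Sgn (ε i)) ∧
      Q = {v | ∃ i : Fin n, v = ε i • ((2 : ℝ) • stdVec i)} ∪
        {v | ∃ i j : Fin n, i < j ∧ v = ε i • stdVec i + ε j • stdVec j} := by
  subst hR
  have hQ' : MemQSet (Rset n) Q := hQ
  have hmax' : ∀ Q' : Set (Fin n → ℝ), MemQSet (Rset n) Q' → Q ⊆ Q' → Q' = Q := hmax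
  classical
  choose g hgQ hgne using fun i => exists_support hQ' i
  set ε : Fin n → ℝ := fun i => if 0 < g i i then 1 else -1 with hεdef
  have hsgn : ∀ i, Sgn (ε i) := by
    intro i
    by_cases h : 0 < g i i
    · exact Or.inl (by simp [hεdef, h])
    · exact Or.inr (by simp [hεdef, h])
  have keypos : ∀ α ∈ Q, ∀ i, 0 < α i → ε i = 1 := by
    intro α hα i h
    have hgt : 0 < g i i := by
      rcases lt_trichotomy (g i i) 0 with hlt | h0 | hgt
      · exact (consistent hQ' hα (hgQ i) h hlt).elim
      · exact (hgne i h0).elim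
      · exact hgt
    simp [hεdef, hgt]
  have keyneg : ∀ α ∈ Q, ∀ i, α i < 0 → ε i = -1 := by
    intro α hα i h
    have hng : ¬ 0 < g i i := fun hgt => consistent hQ' (hgQ i) hα hgt h
    simp [hεdef, hng]
  -- the linear functional v ↦ ∑ ε k * v k
  set F : (Fin n → ℝ) → ℝ := fun v => ∑ k, ε k * v k with hFdef
  have hFadd : ∀ v w, F (v + w) = F v + F w := by
    intro v w
    simp [hFdef, mul_add, Finset.sum_add_distrib]
  have hFneg : ∀ v, F (-v) = -F v := by
    intro v
    simp [hFdef]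
  have hFsmul : ∀ (c : ℝ) (v), F (c • v) = c * F v := by
    intro c v
    simp [hFdef, Finset.mul_sum, mul_left_comm]
  have hFstd : ∀ i, F (stdVec i) = ε i := by
    intro i
    simp [hFdef, mul_ite, Finset.sum_ite_eq']
  have hsq : ∀ i, ε i * ε i = 1 := by
    intro i
    rcases hsgn i with h | h <;> rw [h] <;> norm_num
  have hFR : ∀ v ∈ Rset n, F v = 2 ∨ F v = 0 ∨ F v = -2 := by
    intro v hv
    rcases hv with ⟨a, rfl | rfl⟩ | ⟨a, b, hab, s, t, hs, ht, rfl⟩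
    · rw [hFsmul, hFstd]
      rcases hsgn a with h | h <;> rw [h] <;> norm_num
    · rw [hFneg, hFsmul, hFstd]
      rcases hsgn a with h | h <;> rw [h] <;> norm_num
    · rw [hFadd, hFsmul, hFsmul, hFstd, hFstd]
      rcases hs with rfl | rfl <;> rcases ht with rfl | rfl <;>
        rcases hsgn a with h1 | h1 <;> rcases hsgn b with h2 | h2 <;>
        rw [h1, h2] <;> norm_num
  set QE : Set (Fin n → ℝ) :=
    {v | ∃ i : Fin n, v = ε i • ((2 : ℝ) • stdVec i)} ∪
      {v | ∃ i j : Fin n, i < j ∧ v = ε i • stdVec i + ε j • stdVec j} with hQEdef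
  have hFQE : ∀ v ∈ QE, F v = 2 := by
    intro v hv
    rcases hv with ⟨i, rfl⟩ | ⟨i, j, hij, rfl⟩
    · rw [hFsmul, hFsmul, hFstd]
      have := hsq i
      nlinarith [hsq i]
    · rw [hFadd, hFsmul, hFsmul, hFstd, hFstd, hsq i, hsq j]
      norm_num
  have hQEsub : QE ⊆ Rset n := by
    intro v hv
    rcases hv with ⟨i, rfl⟩ | ⟨i, j, hij, rfl⟩
    · rcases hsgn i with h | h <;> rw [h]
      · rw [one_smul]; exact long_mem i
      · rw [neg_one_smul]; exact long_mem' i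
    · exact Or.inr ⟨i, j, hij, ε i, ε j, hsgn i, hsgn j, rfl⟩
  have hQEmem : MemQSet (Rset n) QE := by
    refine ⟨hQEsub, ?_, ?_, ?_⟩
    · intro α hα hnα
      have h1 := hFQE α hα
      have h2 := hFQE _ hnα
      rw [hFneg] at h2
      linarith
    · intro α hα β hβ hsum
      have h4 : F (α + β) = 4 := by
        rw [hFadd, hFQE α hα, hFQE β hβ]; norm_num
      rcases hFR _ hsum with h | h | h <;> linarith
    · intro γ hγ
      have hu : ∀ i, ε i • ((2 : ℝ) • stdVec i) ∈ Submodule.span ℤ QE :=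
        fun i => Submodule.subset_span (Or.inl ⟨i, rfl⟩)
      have hw : ∀ i j, i < j →
          ε i • stdVec i + ε j • stdVec j ∈ Submodule.span ℤ QE :=
        fun i j hij => Submodule.subset_span (Or.inr ⟨i, j, hij, rfl⟩)
      have h2 : ∀ i, (2 : ℝ) • stdVec i ∈ Submodule.span ℤ QE := by
        intro i
        rcases hsgn i with h | h
        · have := hu i; rwa [h, one_smul] at this
        · have := hu i; rw [h, neg_one_smul] at this
          simpa using Submodule.neg_mem _ this
      rcases hγ with ⟨a, rfl | rfl⟩ | ⟨a, b, hab, s, t, hs, ht, rfl⟩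
      · exact h2 a
      · exact Submodule.neg_mem _ (h2 a)
      · have hwab := hw a b hab
        have hua := hu a
        rcases sgn_cases hs (hsgn a) with rfl | rfl <;>
          rcases sgn_cases ht (hsgn b) with rfl | rfl
        · exact hwab
        · have heq : ε a • stdVec a + (-ε b) • stdVec b
              = ε a • ((2 : ℝ) • stdVec a) - (ε a • stdVec a + ε b • stdVec b) := by
            module
          rw [heq]
          exact Submodule.sub_mem _ hua hwab
        · have heq : (-ε a) • stdVec a + ε b • stdVec b
              = (ε a • stdVec a + ε b • stdVec b) - ε a • ((2 : ℝ) • stdVec a) := by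
            module
          rw [heq]
          exact Submodule.sub_mem _ hwab hua
        · have heq : (-ε a) • stdVec a + (-ε b) • stdVec b
              = -(ε a • stdVec a + ε b • stdVec b) := by module
          rw [heq]
          exact Submodule.neg_mem _ hwab
  have hsub : Q ⊆ QE := by
    intro α hα
    rcases hQ'.1 hα with ⟨a, rfl | rfl⟩ | ⟨a, b, hab, s, t, hs, ht, rfl⟩
    · left
      refine ⟨a, ?_⟩
      have h1 : ε a = 1 := keypos _ hα a (by norm_num)
      rw [h1, one_smul]
    · left
      refine ⟨a, ?_⟩
      have h1 : ε a = -1 := keyneg _ hα a (by norm_num)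
      rw [h1, neg_one_smul]
    · right
      have h1 : ε a = s := by
        rcases hs with rfl | rfl
        · exact keypos _ hα a (by norm_num [hab.ne])
        · exact keyneg _ hα a (by norm_num [hab.ne])
      have h2 : ε b = t := by
        rcases ht with rfl | rfl
        · exact keypos _ hα b (by norm_num [hab.ne'])
        · exact keyneg _ hα b (by norm_num [hab.ne'])
      exact ⟨a, b, hab, by rw [h1, h2]⟩
  exact ⟨ε, hsgn, (hmax' QE hQEmem hsub).symm⟩
end
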